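/- arXiv:2003.04507 — 11 statements merged into one kernel-verified Lean document; each statement's English description precedes it below -/
import Mathlib

section
/- Let x : [0,∞) → ℝ be càdlàg with x(0) ≥ 0, and define Γ₂(x)(t) = sup_{0 ≤ s ≤ t} max(−x(s), 0) and Γ₁(x)(t) = x(t) + Γ₂(x)(t). Then the pair (Γ₁(x), Γ₂(x)) solves the one-dimensional Skorokhod problem for x; that is, Γ₁(x) = x + Γ₂(x), Γ₁(x)(t) ≥ 0 for all t ≥ 0, Γ₂(x)(0) = 0, Γ₂(x) is nondecreasing, and the Lebesgue–Stieltjes measure induced by Γ₂(x) assigns zero mass to the set {t ≥ 0 : Γ₁(x)(t) > 0}. -/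
open MeasureTheory

/-- A function `x : ℝ → ℝ`, viewed as a path on `[0,∞)`, is càdlàg if it is
right-continuous at every `t ≥ 0` and has left limits at every `t > 0`. -/
def Cadlag (x : ℝ → ℝ) : Prop :=
  (∀ t : ℝ, 0 ≤ t → ContinuousWithinAt x (Set.Ici t) t) ∧
  (∀ t : ℝ, 0 < t → ∃ l : ℝ, Filter.Tendsto x (nhdsWithin t (Set.Iio t)) (nhds l))

/-- The second component of the one-dimensional Skorokhod map:
`Γ₂(x)(t) = sup_{0 ≤ s ≤ t} max(−x(s), 0)` (equal to `0` for `t < 0`). -/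
noncomputable def Gamma2 (x : ℝ → ℝ) (t : ℝ) : ℝ :=
  sSup ((fun s => max (-x s) 0) '' Set.Icc 0 t)

/-- The first component of the one-dimensional Skorokhod map:
`Γ₁(x)(t) = x(t) + Γ₂(x)(t)`. -/
noncomputable def Gamma1 (x : ℝ → ℝ) (t : ℝ) : ℝ := x t + Gamma2 x t


open Set Filter Function
open scoped Topology

/-!
`Γ₂(x)` is finite because a càdlàg path is bounded on compact intervals, and it is
right-continuous because `x` is. Let `Γ₁(x)(t) > 0`. By right-continuity `Γ₁(x) > Γ₁(x)(t)/2` and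
`Γ₂(x) < Γ₂(x)(t) + Γ₁(x)(t)/2` just after `t`, so `-x < Γ₂(x)(t)` there and the running supremum
stays constant on some `[t, u]`; and `Γ₂(x)` has no jump at `t`, since a jump would force
`Γ₂(x)(t) = -x(t)`. So every such `t` is the left end of an interval `[t, u]` of zero Stieltjes
measure. A set with this property is null: the intervals `(t, u)` have a countable subcover, and
the points they miss are isolated on the right among themselves, hence countably many.
-/

theorem IsCompact.bddBelow_image_of_isBoundedUnder {X α : Type*} [TopologicalSpace X]
    [SemilatticeInf α] [Nonempty α] {f : X → α} {K : Set X} (hK : IsCompact K)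
    (hf : ∀ x ∈ K, IsBoundedUnder (· ≥ ·) (𝓝[K] x) f) : BddBelow (f '' K) := by
  refine hK.induction_on (p := fun U => BddBelow (f '' U)) (by simp)
    (fun U V hUV hV => hV.mono (image_mono hUV))
    (fun U V hU hV => by rw [image_union]; exact hU.union hV) fun x hx => ?_
  obtain ⟨U, hU, hUK⟩ := isBoundedUnder_iff_eventually_bddBelow.1 (hf x hx)
  exact ⟨U, hUK, hU⟩

theorem measure_eq_zero_of_forall_exists_measure_Icc_eq_zero (μ : Measure ℝ) {A : Set ℝ}
    (h : ∀ t ∈ A, ∃ u > t, μ (Icc t u) = 0) : μ A = 0 := by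
  choose! u htu hu using h
  obtain ⟨T, hTA, hTc, hTW⟩ :=
    TopologicalSpace.isOpen_biUnion_countable A (fun t => Ioo t (u t)) fun _ _ => isOpen_Ioo
  set W := ⋃ t ∈ A, Ioo t (u t)
  have hW : μ W = 0 := by
    rw [← hTW]
    exact (measure_biUnion_null_iff hTc).2 fun t ht =>
      measure_mono_null Ioo_subset_Icc_self (hu t (hTA ht))
  have hcount : (A \ W).Countable := by
    refine Countable.mono (fun t ht => ?_)
      (countable_setOfPred_isolated_right_within (s := A \ W))
    refine ⟨ht, empty_mem_iff_bot.1 (mem_nhdsWithin.2 ⟨Iio (u t), isOpen_Iio, htu t ht.1, ?_⟩)⟩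
    rintro s ⟨hsu, ⟨-, hsW⟩, hts⟩
    exact hsW (mem_biUnion ht.1 ⟨hts, hsu⟩)
  rw [← measure_sdiff_null hW, ← biUnion_of_singleton (A \ W)]
  exact (measure_biUnion_null_iff hcount).2 fun t ht =>
    measure_mono_null (singleton_subset_iff.2 (left_mem_Icc.2 (htu t ht.1).le)) (hu t ht.1)

namespace Cadlag

variable {x : ℝ → ℝ}

theorem isBoundedUnder_ge_nhdsWithin_Ici (hx : Cadlag x) {t : ℝ} (ht : 0 ≤ t) :
    IsBoundedUnder (· ≥ ·) (𝓝[Ici 0] t) x := by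
  rcases ht.eq_or_lt with rfl | ht
  · exact (hx.1 0 le_rfl).isBoundedUnder_ge
  · obtain ⟨l, hl⟩ := hx.2 t ht
    refine IsBoundedUnder.mono nhdsWithin_le_nhds ?_
    rw [← nhdsLT_sup_nhdsGE, IsBoundedUnder, map_sup]
    exact isBounded_sup hl.isBoundedUnder_ge (hx.1 t ht.le).isBoundedUnder_ge

theorem bddBelow_image_Icc (hx : Cadlag x) (t : ℝ) : BddBelow (x '' Icc 0 t) :=
  isCompact_Icc.bddBelow_image_of_isBoundedUnder fun _ hs =>
    (hx.isBoundedUnder_ge_nhdsWithin_Ici hs.1).mono (nhdsWithin_mono _ Icc_subset_Ici_self)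

end Cadlag

section SkorokhodMap

variable {x : ℝ → ℝ}

theorem gamma1_apply (x : ℝ → ℝ) (t : ℝ) : Gamma1 x t = x t + Gamma2 x t := rfl

theorem gamma2_nonneg (x : ℝ → ℝ) (t : ℝ) : 0 ≤ Gamma2 x t :=
  Real.sSup_nonneg (by rintro _ ⟨s, -, rfl⟩; exact le_max_right _ _)

theorem gamma2_of_neg (x : ℝ → ℝ) {t : ℝ} (ht : t < 0) : Gamma2 x t = 0 := by
  simp [Gamma2, Icc_eq_empty (not_le.2 ht)]

theorem gamma2_zero (hx0 : 0 ≤ x 0) : Gamma2 x 0 = 0 := by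
  simpa [Gamma2] using hx0

theorem bddAbove_image_Icc_gamma2 (hx : Cadlag x) (t : ℝ) :
    BddAbove ((fun s => max (-x s) 0) '' Icc 0 t) := by
  have hanti : Antitone fun y : ℝ => max (-y) 0 := fun _ _ h => max_le_max_right _ (neg_le_neg h)
  simpa only [image_image] using hanti.map_bddBelow (hx.bddBelow_image_Icc t)

theorem le_gamma2 (hx : Cadlag x) {s t : ℝ} (hs : s ∈ Icc 0 t) : max (-x s) 0 ≤ Gamma2 x t :=
  le_csSup (bddAbove_image_Icc_gamma2 hx t) ⟨s, hs, rfl⟩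

theorem neg_le_gamma2 (hx : Cadlag x) {t : ℝ} (ht : 0 ≤ t) : -x t ≤ Gamma2 x t :=
  (le_max_left _ _).trans (le_gamma2 hx ⟨ht, le_rfl⟩)

theorem gamma1_nonneg (hx : Cadlag x) {t : ℝ} (ht : 0 ≤ t) : 0 ≤ Gamma1 x t := by
  linarith [neg_le_gamma2 hx ht, gamma1_apply x t]

theorem monotone_gamma2 (hx : Cadlag x) : Monotone (Gamma2 x) := by
  intro a b hab
  rcases lt_or_ge a 0 with ha | ha
  · exact (gamma2_of_neg x ha).trans_le (gamma2_nonneg x b)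
  · exact csSup_le_csSup (bddAbove_image_Icc_gamma2 hx b) ((nonempty_Icc.2 ha).image _)
      (image_mono (Icc_subset_Icc_right hab))

theorem gamma2_le_of_forall_Ioc (hx : Cadlag x) {t u c : ℝ} (ht : 0 ≤ t) (htu : t ≤ u)
    (hc : Gamma2 x t ≤ c) (h : ∀ s ∈ Ioc t u, -x s ≤ c) : Gamma2 x u ≤ c := by
  refine csSup_le ((nonempty_Icc.2 (ht.trans htu)).image _) ?_
  rintro _ ⟨s, hs, rfl⟩
  rcases le_or_gt s t with hst | hst
  · exact (le_gamma2 hx ⟨hs.1, hst⟩).trans hc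
  · exact max_le (h s ⟨hst, hs.2⟩) ((gamma2_nonneg x t).trans hc)

theorem eventually_gamma2_le (hx : Cadlag x) {t c : ℝ} (ht : 0 ≤ t) (hc : Gamma2 x t ≤ c)
    (h : ∀ᶠ s in 𝓝[≥] t, -x s ≤ c) : ∀ᶠ s in 𝓝[≥] t, Gamma2 x s ≤ c := by
  obtain ⟨u, htu, hu⟩ := mem_nhdsGE_iff_exists_Icc_subset.1 h
  filter_upwards [Icc_mem_nhdsGE htu] with s hs
  exact gamma2_le_of_forall_Ioc hx ht hs.1 hc fun r hr => hu ⟨hr.1.le, hr.2.trans hs.2⟩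

theorem continuousWithinAt_Ici_gamma2 (hx : Cadlag x) (t : ℝ) :
    ContinuousWithinAt (Gamma2 x) (Ici t) t := by
  rcases lt_or_ge t 0 with ht | ht
  · have hzero : (fun _ => (0 : ℝ)) =ᶠ[𝓝 t] Gamma2 x :=
      eventually_of_mem (Iio_mem_nhds ht) fun s hs => (gamma2_of_neg x hs).symm
    exact (continuousAt_const.congr hzero).continuousWithinAt
  refine tendsto_order.2 ⟨fun a ha => ?_, fun b hb => ?_⟩
  · filter_upwards [self_mem_nhdsWithin] with s hs using ha.trans_le (monotone_gamma2 hx hs)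
  · obtain ⟨c, htc, hcb⟩ := exists_between hb
    have hxc : ∀ᶠ s in 𝓝[≥] t, -x s ≤ c :=
      ((hx.1 t ht).neg.eventually_lt_const ((neg_le_gamma2 hx ht).trans_lt htc)).mono
        fun _ => le_of_lt
    filter_upwards [eventually_gamma2_le hx ht htc.le hxc] with s hs using hs.trans_lt hcb

theorem exists_gt_gamma2_le (hx : Cadlag x) {t : ℝ} (ht : 0 ≤ t) (hpos : 0 < Gamma1 x t) :
    ∃ u > t, Gamma2 x u ≤ Gamma2 x t := by
  have hy : ∀ᶠ s in 𝓝[≥] t, Gamma2 x s < Gamma2 x t + Gamma1 x t / 2 :=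
    (continuousWithinAt_Ici_gamma2 hx t).eventually_lt_const (by linarith)
  have hgamma1 : ContinuousWithinAt (Gamma1 x) (Ici t) t :=
    (hx.1 t ht).add (continuousWithinAt_Ici_gamma2 hx t)
  have hz : ∀ᶠ s in 𝓝[≥] t, Gamma1 x t / 2 < Gamma1 x s :=
    hgamma1.eventually_const_lt (half_lt_self hpos)
  have hxt : ∀ᶠ s in 𝓝[≥] t, -x s ≤ Gamma2 x t := by
    filter_upwards [hy, hz] with s hys hzs
    linarith [gamma1_apply x s]
  obtain ⟨u, hu, htu⟩ := (((eventually_gamma2_le hx ht le_rfl hxt).filter_mono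
    (nhdsWithin_mono _ Ioi_subset_Ici_self)).and self_mem_nhdsWithin).exists
  exact ⟨u, htu, hu⟩

theorem gamma2_le_max_leftLim (hx : Cadlag x) {t : ℝ} (ht : 0 ≤ t) :
    Gamma2 x t ≤ max (leftLim (Gamma2 x) t) (max (-x t) 0) := by
  refine csSup_le ((nonempty_Icc.2 ht).image _) ?_
  rintro _ ⟨s, hs, rfl⟩
  rcases hs.2.lt_or_eq with hst | rfl
  · exact le_max_of_le_left
      ((le_gamma2 hx ⟨hs.1, le_rfl⟩).trans ((monotone_gamma2 hx).le_leftLim hst))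
  · exact le_max_right _ _

theorem leftLim_gamma2 (hx : Cadlag x) {t : ℝ} (ht : 0 ≤ t) (hpos : 0 < Gamma1 x t) :
    leftLim (Gamma2 x) t = Gamma2 x t := by
  have hmono := monotone_gamma2 hx
  have hlim_nonneg : 0 ≤ leftLim (Gamma2 x) t :=
    (gamma2_nonneg x (t - 1)).trans (hmono.le_leftLim (sub_one_lt t))
  have hjump := gamma2_le_max_leftLim hx ht
  simp only [le_max_iff] at hjump
  refine le_antisymm (hmono.leftLim_le le_rfl) ?_
  rcases hjump with h | h | h
  · exact h
  · linarith [gamma1_apply x t]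
  · linarith

end SkorokhodMap

/-- The pair `(Γ₁(x), Γ₂(x))` solves the one-dimensional Skorokhod problem for a
càdlàg path `x` with `x(0) ≥ 0`: `Γ₁(x) = x + Γ₂(x)`, `Γ₁(x) ≥ 0` on `[0,∞)`,
`Γ₂(x)(0) = 0`, `Γ₂(x)` is nondecreasing on `[0,∞)`, and the Lebesgue–Stieltjes
measure induced by `Γ₂(x)` assigns zero mass to `{t ≥ 0 : Γ₁(x)(t) > 0}`. -/
theorem skorokhod_map_solves_skorokhod_problem
    (x : ℝ → ℝ) (hx : Cadlag x) (hx0 : 0 ≤ x 0) :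
    (∀ t : ℝ, 0 ≤ t → Gamma1 x t = x t + Gamma2 x t) ∧
    (∀ t : ℝ, 0 ≤ t → 0 ≤ Gamma1 x t) ∧
    Gamma2 x 0 = 0 ∧
    MonotoneOn (Gamma2 x) (Set.Ici 0) ∧
    ∃ S : StieltjesFunction ℝ, (∀ t : ℝ, S t = Gamma2 x t) ∧
      S.measure {t : ℝ | 0 ≤ t ∧ 0 < Gamma1 x t} = 0 := by
  have hmono := monotone_gamma2 hx
  refine ⟨fun t _ => gamma1_apply x t, fun _ => gamma1_nonneg hx, gamma2_zero hx0, hmono.monotoneOn _,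
    ⟨Gamma2 x, hmono, continuousWithinAt_Ici_gamma2 hx⟩, fun _ => rfl, ?_⟩
  refine measure_eq_zero_of_forall_exists_measure_Icc_eq_zero _ fun t ⟨ht, hpos⟩ => ?_
  obtain ⟨u, htu, hu⟩ := exists_gt_gamma2_le hx ht hpos
  refine ⟨u, htu, ?_⟩
  rw [StieltjesFunction.measure_Icc, ENNReal.ofReal_eq_zero]
  change Gamma2 x u - leftLim (Gamma2 x) t ≤ 0
  rw [leftLim_gamma2 hx ht hpos]
  exact sub_nonpos.2 hu
end

section
/- Let x : [0,∞) → ℝ be càdlàg with x(0) ≥ 0. If (z, y) is any pair of càdlàg functions solving the one-dimensional Skorokhod problem for x, then z(t) = Γ₁(x)(t) and y(t) = Γ₂(x)(t) for all t ≥ 0, where Γ₂(x)(t) = sup_{0 ≤ s ≤ t} max(−x(s), 0) and Γ₁(x)(t) = x(t) + Γ₂(x)(t). In particular, the solution of the one-dimensional Skorokhod problem for x is unique. -/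
/-!
Since `y` is nondecreasing, nonnegative and `y ≥ -x` (because `z ≥ 0`), `y(t)` dominates
`max(-x(s), 0)` for every `s ≤ t`, so `Γ₂(x)(t) ≤ y(t)`. Conversely, at every `s ∈ (0, t]`
where `y(s)` exceeds the level `M = Γ₂(x)(t) ≥ -x(s)` we have `z(s) > 0`, so the Stieltjes
measure of `y` does not charge the set where `y > M`. A nondecreasing right-continuous
function that starts at or below `M` and whose measure does not charge `{y > M}` never
exceeds `M`: otherwise it would stay constant from the first time it exceeds `M`.
-/

open MeasureTheory

open Set

namespace StieltjesFunction

theorem le_of_measure_lt_inter_Ioc_eq_zero (S : StieltjesFunction ℝ) {a b M : ℝ}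
    (ha : S a ≤ M) (hnull : S.measure ({s | M < S s} ∩ Ioc a b) = 0) : S b ≤ M := by
  by_contra! hb
  set U := {s | M < S s}
  have ha_lower : a ∈ lowerBounds U := fun s hs =>
    le_of_not_gt fun hsa => (S.mono hsa.le |>.trans ha).not_gt hs
  set u := sInf U
  have hau : a ≤ u := le_csInf ⟨b, hb⟩ ha_lower
  have hIoi : Ioi u ⊆ U := fun s hus => by
    obtain ⟨r, hr, hrs⟩ := exists_lt_of_csInf_lt ⟨b, hb⟩ hus
    exact hr.trans_le (S.mono hrs.le)
  have hbelow : ∀ s < u, S s ≤ M := fun s hsu =>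
    le_of_not_gt fun hs => (csInf_le ⟨a, ha_lower⟩ hs).not_gt hsu
  rcases le_or_gt (S u) M with hu | hu
  · have hIoc : S.measure (Ioc u b) = 0 := measure_mono_null
      (show Ioc u b ⊆ U ∩ Ioc a b from fun s hs =>
        ⟨hIoi hs.1, hau.trans_lt hs.1, hs.2⟩) hnull
    rw [measure_Ioc, ENNReal.ofReal_eq_zero] at hIoc
    linarith
  · have hau' : a < u := lt_of_le_of_ne hau fun hua => hu.not_ge (hua ▸ ha)
    have hIcc : S.measure (Icc u b) = 0 := measure_mono_null
      (show Icc u b ⊆ U ∩ Ioc a b from fun s hs =>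
        ⟨hu.trans_le (S.mono hs.1), hau'.trans_le hs.1, hs.2⟩) hnull
    have hleftLim : Function.leftLim S u ≤ M :=
      le_of_tendsto (S.mono.tendsto_leftLim u) (eventually_nhdsWithin_of_forall hbelow)
    rw [measure_Icc, ENNReal.ofReal_eq_zero] at hIcc
    linarith

end StieltjesFunction

theorem Gamma2_le_iff {x : ℝ → ℝ} {t c : ℝ} (ht : 0 ≤ t)
    (hbdd : ∃ b, ∀ s ∈ Icc 0 t, -x s ≤ b) :
    Gamma2 x t ≤ c ↔ 0 ≤ c ∧ ∀ s ∈ Icc 0 t, -x s ≤ c := by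
  obtain ⟨b, hb⟩ := hbdd
  have hbdd' : BddAbove ((fun s => max (-x s) 0) '' Icc 0 t) :=
    ⟨max b 0, forall_mem_image.2 fun s hs => max_le_max_right 0 (hb s hs)⟩
  rw [Gamma2, csSup_le_iff hbdd' ((nonempty_Icc.2 ht).image _), forall_mem_image]
  simp only [max_le_iff]
  exact ⟨fun h => ⟨(h ⟨le_rfl, ht⟩).2, fun s hs => (h hs).1⟩, fun h s hs => ⟨h.2 s hs, h.1⟩⟩

theorem skorokhod_problem_uniqueness_general
    (x z y : ℝ → ℝ)
    (hzxy : ∀ t : ℝ, 0 ≤ t → z t = x t + y t)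
    (hznn : ∀ t : ℝ, 0 ≤ t → 0 ≤ z t)
    (hy0 : y 0 = 0)
    (hymono : MonotoneOn y (Set.Ici 0))
    (hyflat : ∃ S : StieltjesFunction ℝ, (∀ t : ℝ, 0 ≤ t → S t = y t) ∧
      (∀ t : ℝ, t ≤ 0 → S t = 0) ∧ S.measure {t : ℝ | 0 ≤ t ∧ 0 < z t} = 0) :
    ∀ t : ℝ, 0 ≤ t → z t = Gamma1 x t ∧ y t = Gamma2 x t := by
  obtain ⟨S, hSy, -, hSnull⟩ := hyflat
  intro t ht
  have hy_nonneg : ∀ s, 0 ≤ s → 0 ≤ y s := fun s hs => hy0 ▸ hymono self_mem_Ici hs hs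
  have hx_le_y : ∀ s, 0 ≤ s → -x s ≤ y s := fun s hs => by linarith [hznn s hs, hzxy s hs]
  have hyt_bound : ∀ s ∈ Icc 0 t, -x s ≤ y t := fun s hs =>
    (hx_le_y s hs.1).trans (hymono hs.1 ht hs.2)
  obtain ⟨hM_nonneg, hM_bound⟩ := (Gamma2_le_iff ht ⟨y t, hyt_bound⟩).1 le_rfl
  have hMy : Gamma2 x t ≤ y t :=
    (Gamma2_le_iff ht ⟨y t, hyt_bound⟩).2 ⟨hy_nonneg t ht, hyt_bound⟩
  have hyM : y t ≤ Gamma2 x t := by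
    rw [← hSy t ht]
    refine S.le_of_measure_lt_inter_Ioc_eq_zero (a := 0)
      (by rw [hSy 0 le_rfl, hy0]; exact hM_nonneg) (measure_mono_null ?_ hSnull)
    rintro s ⟨hMs, hs0, hst⟩
    have hys : Gamma2 x t < y s := hSy s hs0.le ▸ hMs
    exact ⟨hs0.le, by linarith [hzxy s hs0.le, hM_bound s ⟨hs0.le, hst⟩]⟩
  have hyt : y t = Gamma2 x t := le_antisymm hyM hMy
  exact ⟨by rw [Gamma1, hzxy t ht, hyt], hyt⟩

/-- Uniqueness for the one-dimensional Skorokhod problem: if `(z, y)` is a pair of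
càdlàg functions with `z = x + y` and `z ≥ 0` on `[0,∞)`, `y(0) = 0`, `y`
nondecreasing on `[0,∞)`, and the Lebesgue–Stieltjes measure induced by `y`
assigns zero mass to `{t ≥ 0 : z(t) > 0}`, then `(z, y) = (Γ₁(x), Γ₂(x))`. -/
theorem skorokhod_problem_uniqueness
    (x z y : ℝ → ℝ) (hx : Cadlag x) (hx0 : 0 ≤ x 0)
    (hz : Cadlag z) (hy : Cadlag y)
    (hzxy : ∀ t : ℝ, 0 ≤ t → z t = x t + y t)
    (hznn : ∀ t : ℝ, 0 ≤ t → 0 ≤ z t)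
    (hy0 : y 0 = 0)
    (hymono : MonotoneOn y (Set.Ici 0))
    (hyflat : ∃ S : StieltjesFunction ℝ, (∀ t : ℝ, 0 ≤ t → S t = y t) ∧
      (∀ t : ℝ, t ≤ 0 → S t = 0) ∧ S.measure {t : ℝ | 0 ≤ t ∧ 0 < z t} = 0) :
    ∀ t : ℝ, 0 ≤ t → z t = Gamma1 x t ∧ y t = Gamma2 x t :=
  skorokhod_problem_uniqueness_general x z y hzxy hznn hy0 hymono hyflat
end

section
/- Let x₁, x₂ : [0,∞) → ℝ be càdlàg functions with x₁(0) ≥ 0 and x₂(0) ≥ 0. Then for every t ≥ 0, sup_{0 ≤ s ≤ t} |Γ₁(x₁)(s) − Γ₁(x₂)(s)| ≤ 2 · sup_{0 ≤ s ≤ t} |x₁(s) − x₂(s)|, where Γ₁(x)(t) = x(t) + sup_{0 ≤ s ≤ t} max(−x(s), 0). -/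
/-!
The reflection term `Γ₂(x)(t)` is the supremum over `[0, t]` of `(-x)⁺`, and `y ↦ max (-y) 0` is
1-Lipschitz, so `Γ₂` is 1-Lipschitz for the uniform norm on `[0, t]`; since `Γ₁ = id + Γ₂`, the
constant for `Γ₁` is `1 + 1 = 2`. The càdlàg hypothesis only serves to make every supremum
involved a supremum of a bounded set: a càdlàg path is locally bounded on `[0, ∞)`, hence bounded
on each compact interval `[0, t]`.
-/

open Filter Set Topology

theorem IsCompact.bddAbove_image_of_isBoundedUnder {X α : Type*} [TopologicalSpace X]
    [SemilatticeSup α] [Nonempty α] {K : Set X} {f : X → α} (hK : IsCompact K)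
    (hf : ∀ x ∈ K, IsBoundedUnder (· ≤ ·) (𝓝[K] x) f) : BddAbove (f '' K) := by
  refine hK.induction_on (p := fun S => BddAbove (f '' S)) (by simp)
    (fun _ _ hST hT => hT.mono (image_mono hST))
    (fun _ _ hS hT => by rw [image_union]; exact hS.union hT) fun x hx => ?_
  obtain ⟨S, hS, hSK⟩ := isBoundedUnder_iff_eventually_bddAbove.1 (hf x hx)
  exact ⟨S, hSK, hS⟩

theorem csSup_image_le_csSup_image_add {β α : Type*} [ConditionallyCompleteLattice α] [Add α]
    [AddRightMono α] {S : Set β} {f g : β → α} {D : α} (hS : S.Nonempty)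
    (hg : BddAbove (g '' S)) (h : ∀ u ∈ S, f u ≤ g u + D) : sSup (f '' S) ≤ sSup (g '' S) + D :=
  csSup_le (hS.image f) <| forall_mem_image.2 fun u hu =>
    (h u hu).trans (add_le_add_left (le_csSup hg (mem_image_of_mem g hu)) D)

namespace Cadlag

theorem sub {x y : ℝ → ℝ} (hx : Cadlag x) (hy : Cadlag y) : Cadlag (x - y) :=
  ⟨fun t ht => (hx.1 t ht).sub (hy.1 t ht), fun t ht =>
    let ⟨l, hl⟩ := hx.2 t ht
    let ⟨m, hm⟩ := hy.2 t ht
    ⟨l - m, hl.sub hm⟩⟩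

theorem isBoundedUnder_abs {x : ℝ → ℝ} (hx : Cadlag x) {s : ℝ} (hs : 0 ≤ s) :
    IsBoundedUnder (· ≤ ·) (𝓝[Ici 0] s) (fun u => |x u|) := by
  have hright : IsBoundedUnder (· ≤ ·) (𝓝[≥] s) (fun u => |x u|) :=
    (hx.1 s hs).abs.isBoundedUnder_le
  rcases hs.eq_or_lt with rfl | hpos
  · exact hright
  · obtain ⟨l, hl⟩ := hx.2 s hpos
    refine IsBoundedUnder.mono nhdsWithin_le_nhds ?_
    rw [← nhdsLT_sup_nhdsGE, IsBoundedUnder, map_sup]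
    exact isBounded_sup hl.abs.isBoundedUnder_le hright

theorem bddAbove_abs_image_Icc {x : ℝ → ℝ} (hx : Cadlag x) (t : ℝ) :
    BddAbove ((fun u => |x u|) '' Icc 0 t) :=
  isCompact_Icc.bddAbove_image_of_isBoundedUnder fun _ hs =>
    (hx.isBoundedUnder_abs hs.1).mono (nhdsWithin_mono _ Icc_subset_Ici_self)

end Cadlag

theorem Gamma2_le_add {x₁ x₂ : ℝ → ℝ} {s D : ℝ} (hs : 0 ≤ s)
    (hx₂ : BddAbove ((fun u => |x₂ u|) '' Icc 0 s)) (h : ∀ u ∈ Icc 0 s, |x₁ u - x₂ u| ≤ D) :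
    Gamma2 x₁ s ≤ Gamma2 x₂ s + D := by
  refine csSup_image_le_csSup_image_add (nonempty_Icc.2 hs) ?_ fun u hu => ?_
  · obtain ⟨M, hM⟩ := hx₂
    refine ⟨M, forall_mem_image.2 fun u hu => ?_⟩
    exact (max_le (neg_le_abs _) (abs_nonneg _)).trans (hM (mem_image_of_mem _ hu))
  · have := abs_max_sub_max_le_abs (-x₁ u) (-x₂ u) 0
    rw [neg_sub_neg, abs_sub_comm (x₂ u)] at this
    linarith [le_abs_self (max (-x₁ u) 0 - max (-x₂ u) 0), h u hu]

theorem abs_Gamma2_sub_le {x₁ x₂ : ℝ → ℝ} {s D : ℝ} (hs : 0 ≤ s)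
    (hx₁ : BddAbove ((fun u => |x₁ u|) '' Icc 0 s))
    (hx₂ : BddAbove ((fun u => |x₂ u|) '' Icc 0 s)) (h : ∀ u ∈ Icc 0 s, |x₁ u - x₂ u| ≤ D) :
    |Gamma2 x₁ s - Gamma2 x₂ s| ≤ D := by
  have h₁₂ := Gamma2_le_add hs hx₂ h
  have h₂₁ := Gamma2_le_add hs hx₁ fun u hu => abs_sub_comm (x₂ u) (x₁ u) ▸ h u hu
  exact abs_sub_le_iff.2 ⟨by linarith, by linarith⟩

theorem skorokhod_map_fst_lipschitz_general
    (x₁ x₂ : ℝ → ℝ) (h₁ : Cadlag x₁) (h₂ : Cadlag x₂) (t : ℝ) :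
    sSup ((fun s => |Gamma1 x₁ s - Gamma1 x₂ s|) '' Set.Icc 0 t) ≤
      2 * sSup ((fun s => |x₁ s - x₂ s|) '' Set.Icc 0 t) := by
  set D := sSup ((fun s => |x₁ s - x₂ s|) '' Set.Icc 0 t)
  have hD : ∀ u ∈ Icc 0 t, |x₁ u - x₂ u| ≤ D := fun u hu =>
    le_csSup ((h₁.sub h₂).bddAbove_abs_image_Icc t) (mem_image_of_mem _ hu)
  have hD_nonneg : 0 ≤ D := Real.sSup_nonneg (forall_mem_image.2 fun _ _ => abs_nonneg _)
  -- `Real.sSup_le` needs no nonemptiness: for `t < 0` both sides are `sSup ∅ = 0`.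
  refine Real.sSup_le (forall_mem_image.2 fun s hs => ?_) (mul_nonneg zero_le_two hD_nonneg)
  have hDs : ∀ u ∈ Icc 0 s, |x₁ u - x₂ u| ≤ D := fun u hu =>
    hD u ⟨hu.1, hu.2.trans hs.2⟩
  calc |Gamma1 x₁ s - Gamma1 x₂ s| = |(x₁ s - x₂ s) + (Gamma2 x₁ s - Gamma2 x₂ s)| := by
        unfold Gamma1; ring_nf
    _ ≤ |x₁ s - x₂ s| + |Gamma2 x₁ s - Gamma2 x₂ s| := abs_add_le _ _
    _ ≤ D + D := add_le_add (hD s hs)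
        (abs_Gamma2_sub_le hs.1 (h₁.bddAbove_abs_image_Icc s) (h₂.bddAbove_abs_image_Icc s) hDs)
    _ = 2 * D := by ring

/-- Lipschitz continuity of the first component of the Skorokhod map:
`sup_{0 ≤ s ≤ t} |Γ₁(x₁)(s) − Γ₁(x₂)(s)| ≤ 2 sup_{0 ≤ s ≤ t} |x₁(s) − x₂(s)|`. -/
theorem skorokhod_map_fst_lipschitz
    (x₁ x₂ : ℝ → ℝ) (h₁ : Cadlag x₁) (h₂ : Cadlag x₂)
    (h₁0 : 0 ≤ x₁ 0) (h₂0 : 0 ≤ x₂ 0) (t : ℝ) (ht : 0 ≤ t) :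
    sSup ((fun s => |Gamma1 x₁ s - Gamma1 x₂ s|) '' Set.Icc 0 t) ≤
      2 * sSup ((fun s => |x₁ s - x₂ s|) '' Set.Icc 0 t) :=
  skorokhod_map_fst_lipschitz_general x₁ x₂ h₁ h₂ t
end

section
/- Let x : [0,∞) → ℝ be càdlàg with x(0) ≥ 0, and for a function f and interval [s,t] define the oscillation Osc(f, [s,t]) = sup_{s ≤ u ≤ v ≤ t} |f(v) − f(u)|. Then for all 0 ≤ s < t < ∞, Osc(Γ₁(x), [s,t]) ≤ Osc(x, [s,t]) and Osc(Γ₂(x), [s,t]) ≤ Osc(x, [s,t]), where Γ₂(x)(t) = sup_{0 ≤ s ≤ t} max(−x(s), 0) and Γ₁(x)(t) = x(t) + Γ₂(x)(t). -/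
/-- The oscillation of `f` over `[s,t]`: `Osc(f,[s,t]) = sup_{s ≤ u ≤ v ≤ t} |f(v) − f(u)|`. -/
noncomputable def Osc (f : ℝ → ℝ) (s t : ℝ) : ℝ :=
  sSup ((fun p : ℝ × ℝ => |f p.2 - f p.1|) ''
    {p : ℝ × ℝ | s ≤ p.1 ∧ p.1 ≤ p.2 ∧ p.2 ≤ t})

lemma cadlag_isBounded (x : ℝ → ℝ) (hx : Cadlag x) (T : ℝ) :
    Bornology.IsBounded (x '' Set.Icc 0 T) := by
  refine isCompact_Icc.induction_on (p := fun S => Bornology.IsBounded (x '' S)) (by simp)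
    (fun s t hsub h => h.subset (Set.image_mono hsub))
    (fun s t hsb htb => by show Bornology.IsBounded (x '' (s ∪ t)); rw [Set.image_union]; exact hsb.union htb) ?_
  intro u hu
  have hu0 : (0:ℝ) ≤ u := hu.1
  have hr : Filter.Tendsto x (nhdsWithin u (Set.Ici u)) (nhds (x u)) := hx.1 u hu0
  have hr' : ∀ᶠ r in nhdsWithin u (Set.Ici u), x r ∈ Metric.ball (x u) 1 :=
    hr (Metric.ball_mem_nhds _ one_pos)
  obtain ⟨V, hV, hVsub⟩ := Filter.eventually_iff_exists_mem.mp hr'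
  rcases eq_or_lt_of_le hu0 with h0 | h0
  · refine ⟨V, ?_, ?_⟩
    · have hsub : Set.Icc (0:ℝ) T ⊆ Set.Ici u := fun r hr => h0 ▸ hr.1
      exact Filter.le_def.mp (nhdsWithin_mono u hsub) V hV
    · exact Metric.isBounded_ball.subset (by rintro _ ⟨r, hrV, rfl⟩; exact hVsub r hrV)
  · obtain ⟨l, hl⟩ := hx.2 u h0
    have hl' : ∀ᶠ r in nhdsWithin u (Set.Iio u), x r ∈ Metric.ball l 1 :=
      hl (Metric.ball_mem_nhds _ one_pos)
    obtain ⟨W, hW, hWsub⟩ := Filter.eventually_iff_exists_mem.mp hl'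
    refine ⟨V ∪ W, ?_, ?_⟩
    · apply mem_nhdsWithin_of_mem_nhds
      have huniv : Set.Ici u ∪ Set.Iio u = Set.univ := by
        ext r; simp [le_or_gt]
      have : V ∪ W ∈ nhdsWithin u (Set.Ici u ∪ Set.Iio u) := by
        rw [nhdsWithin_union]
        exact Filter.mem_sup.mpr ⟨Filter.mem_of_superset hV Set.subset_union_left,
          Filter.mem_of_superset hW Set.subset_union_right⟩
      rwa [huniv, nhdsWithin_univ] at this
    · have : x '' (V ∪ W) ⊆ Metric.ball (x u) 1 ∪ Metric.ball l 1 := by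
        rintro _ ⟨r, hrVW, rfl⟩
        rcases hrVW with h | h
        · exact Or.inl (hVsub r h)
        · exact Or.inr (hWsub r h)
      exact (Metric.isBounded_ball.union Metric.isBounded_ball).subset this

lemma cadlag_abs_bound (x : ℝ → ℝ) (hx : Cadlag x) (T : ℝ) :
    ∃ B : ℝ, 0 ≤ B ∧ ∀ r ∈ Set.Icc (0:ℝ) T, |x r| ≤ B := by
  obtain ⟨C, hC⟩ := (isBounded_iff_forall_norm_le).mp (cadlag_isBounded x hx T)
  exact ⟨max C 0, le_max_right _ _, fun r hr =>
    le_trans (hC _ ⟨r, hr, rfl⟩) (le_max_left _ _)⟩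

/-- Oscillation inequality for the one-dimensional Skorokhod map: for `0 ≤ s < t`,
`Osc(Γ₁(x),[s,t]) ≤ Osc(x,[s,t])` and `Osc(Γ₂(x),[s,t]) ≤ Osc(x,[s,t])`. -/
theorem skorokhod_map_oscillation
    (x : ℝ → ℝ) (hx : Cadlag x) (hx0 : 0 ≤ x 0)
    (s t : ℝ) (hs : 0 ≤ s) (hst : s < t) :
    Osc (Gamma1 x) s t ≤ Osc x s t ∧ Osc (Gamma2 x) s t ≤ Osc x s t := by
  obtain ⟨B, hB0, hB⟩ := cadlag_abs_bound x hx t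
  have hst' : s ≤ t := hst.le
  have hmemIcc : ∀ u : ℝ, s ≤ u → u ≤ t → u ∈ Set.Icc (0:ℝ) t :=
    fun u h1 h2 => ⟨hs.trans h1, h2⟩
  have hOscBdd : BddAbove ((fun p : ℝ × ℝ => |x p.2 - x p.1|) ''
      {p : ℝ × ℝ | s ≤ p.1 ∧ p.1 ≤ p.2 ∧ p.2 ≤ t}) := by
    refine ⟨2 * B, ?_⟩
    rintro _ ⟨⟨u, v⟩, ⟨h1, h2, h3⟩, rfl⟩
    have hu := hB u (hmemIcc u h1 (h2.trans h3))
    have hv := hB v (hmemIcc v (h1.trans h2) h3)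
    calc |x v - x u| ≤ |x v| + |x u| := abs_sub _ _
      _ ≤ B + B := add_le_add hv hu
      _ = 2 * B := by ring
  have hpair : ∀ u v : ℝ, s ≤ u → u ≤ v → v ≤ t → |x v - x u| ≤ Osc x s t :=
    fun u v h1 h2 h3 => le_csSup hOscBdd ⟨(u, v), ⟨h1, h2, h3⟩, rfl⟩
  have hOsc0 : 0 ≤ Osc x s t := by
    have h := hpair s s le_rfl le_rfl hst'
    have := abs_nonneg (x s - x s)
    linarith
  have g2Bdd : ∀ v : ℝ, v ≤ t → BddAbove ((fun r => max (-x r) 0) '' Set.Icc 0 v) := by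
    intro v hv
    refine ⟨max B 0, ?_⟩
    rintro _ ⟨r, hr, rfl⟩
    have h1 : |x r| ≤ B := hB r ⟨hr.1, hr.2.trans hv⟩
    have h2 : -x r ≤ B := (neg_le_abs _).trans h1
    exact max_le_max h2 le_rfl
  have g2ne : ∀ v : ℝ, 0 ≤ v → ((fun r => max (-x r) 0) '' Set.Icc 0 v).Nonempty :=
    fun v hv => ⟨_, ⟨0, ⟨le_rfl, hv⟩, rfl⟩⟩
  have g2nonneg : ∀ v : ℝ, 0 ≤ v → v ≤ t → 0 ≤ Gamma2 x v := fun v h1 h2 =>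
    le_trans (le_max_right (-x 0) 0) (le_csSup (g2Bdd v h2) ⟨0, ⟨le_rfl, h1⟩, rfl⟩)
  have g2mono : ∀ u v : ℝ, 0 ≤ u → u ≤ v → v ≤ t → Gamma2 x u ≤ Gamma2 x v :=
    fun u v h1 h2 h3 => csSup_le_csSup (g2Bdd v h3) (g2ne u h1)
      (Set.image_mono (Set.Icc_subset_Icc le_rfl h2))
  have g2ge : ∀ u : ℝ, 0 ≤ u → u ≤ t → -x u ≤ Gamma2 x u := fun u h1 h2 =>
    le_trans (le_max_left _ _) (le_csSup (g2Bdd u h2) ⟨u, ⟨h1, le_rfl⟩, rfl⟩)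
  -- key epsilon estimate
  have key : ∀ u v : ℝ, s ≤ u → u ≤ v → v ≤ t →
      Gamma2 x v - Gamma2 x u ≤ Osc x s t ∧
      Gamma1 x v - Gamma1 x u ≤ Osc x s t := by
    intro u v h1 h2 h3
    have h0u : (0:ℝ) ≤ u := hs.trans h1
    have h0v : (0:ℝ) ≤ v := h0u.trans h2
    have hut : u ≤ t := h2.trans h3
    have main : ∀ ε : ℝ, 0 < ε →
        Gamma2 x v - Gamma2 x u ≤ Osc x s t + ε ∧
        Gamma1 x v - Gamma1 x u ≤ Osc x s t + ε := by
      intro ε hε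
      obtain ⟨w, hw, hwlt⟩ := exists_lt_of_lt_csSup (g2ne v h0v)
        (show Gamma2 x v - ε < Gamma2 x v by linarith)
      obtain ⟨r, hrIcc, rfl⟩ := hw
      have hxuv : |x v - x u| ≤ Osc x s t := hpair u v h1 h2 h3
      have hxuv' : x v - x u ≤ Osc x s t := (le_abs_self _).trans hxuv
      have hsmall : max (-x r) 0 ≤ Gamma2 x u ∨
          (u < r ∧ Gamma2 x v - ε < -x r) := by
        rcases le_or_gt r u with hru | hur
        · exact Or.inl (le_csSup (g2Bdd u hut) ⟨r, ⟨hrIcc.1, hru⟩, rfl⟩)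
        · rcases le_or_gt (-x r) 0 with hneg | hpos
          · left
            rw [max_eq_right hneg]
            exact g2nonneg u h0u hut
          · exact Or.inr ⟨hur, by simpa [max_eq_left hpos.le] using hwlt⟩
      rcases hsmall with hA | ⟨hur, hB2⟩
      · have hgd : Gamma2 x v - Gamma2 x u ≤ ε := by linarith
        constructor
        · linarith
        · simp only [Gamma1]; linarith
      · have hgu : -x u ≤ Gamma2 x u := g2ge u h0u hut
        have hrt : r ≤ t := hrIcc.2.trans h3
        have hxur : |x r - x u| ≤ Osc x s t := hpair u r h1 hur.le hrt
        have hxrv : |x v - x r| ≤ Osc x s t := hpair r v (h1.trans hur.le) hrIcc.2 h3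
        have h5 : x u - x r ≤ Osc x s t := by
          have := neg_abs_le (x r - x u); linarith [hxur]
        have h6 : x v - x r ≤ Osc x s t := (le_abs_self _).trans hxrv
        constructor
        · linarith
        · simp only [Gamma1]; linarith
    constructor
    · refine le_of_forall_pos_le_add fun ε hε => (main ε hε).1
    · refine le_of_forall_pos_le_add fun ε hε => (main ε hε).2
  have habs2 : ∀ u v : ℝ, s ≤ u → u ≤ v → v ≤ t →
      |Gamma2 x v - Gamma2 x u| ≤ Osc x s t := by
    intro u v h1 h2 h3
    rw [abs_sub_le_iff]
    refine ⟨(key u v h1 h2 h3).1, ?_⟩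
    have := g2mono u v (hs.trans h1) h2 h3
    linarith
  have habs1 : ∀ u v : ℝ, s ≤ u → u ≤ v → v ≤ t →
      |Gamma1 x v - Gamma1 x u| ≤ Osc x s t := by
    intro u v h1 h2 h3
    rw [abs_sub_le_iff]
    refine ⟨(key u v h1 h2 h3).2, ?_⟩
    have hg := g2mono u v (hs.trans h1) h2 h3
    have hxuv : |x v - x u| ≤ Osc x s t := hpair u v h1 h2 h3
    have := neg_abs_le (x v - x u)
    simp only [Gamma1]
    linarith
  constructor
  · refine Real.sSup_le ?_ hOsc0
    rintro _ ⟨⟨u, v⟩, ⟨h1, h2, h3⟩, rfl⟩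
    exact habs1 u v h1 h2 h3
  · refine Real.sSup_le ?_ hOsc0
    rintro _ ⟨⟨u, v⟩, ⟨h1, h2, h3⟩, rfl⟩
    exact habs2 u v h1 h2 h3
end

section
/- Fix constants b ∈ ℝ, σ ∈ ℝ, μ > 0, β > 0, γ > 0, a continuous function W : [0,∞) → ℝ with W(0) = 0, and initial values X₀ ∈ ℝ, V₀ ≥ 0. Suppose (X, V) and (X', V') are two pairs of continuous functions from [0,∞) to ℝ satisfying, for all t ≥ 0, X(t) = X₀ + ∫₀ᵗ [b + μ·max(−X(s), V(s))] ds + σW(t) and V(t) = V₀ + ∫₀ᵗ [β·max(−(X(s)+V(s)), 0) − γV(s)] ds (and likewise for (X', V')). Then X(t) = X'(t) and V(t) = V'(t) for all t ≥ 0; i.e., pathwise uniqueness holds for the Halfin–Whitt limit system. -/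
/-!
Write `Z = (X, V)`, `N(t) = (σ W(t), 0)` and `F` for the drift of the system, so that
`Z(t) = Z₀ + ∫₀ᵗ F(Z) + N(t)`. The noise is not differentiable, but `Y = Z - N` is: it solves the
ODE `Y' = F(Y + N(t))`, whose right-hand side is Lipschitz in `Y` uniformly in `t` because `max`
and the negative part are `1`-Lipschitz. Gronwall's inequality then forces two solutions with the
same initial value to coincide.
-/

open Set MeasureTheory
open scoped NNReal

section IntegralEquation

variable {E : Type*} [NormedAddCommGroup E] [NormedSpace ℝ E] [CompleteSpace E]

theorem hasDerivWithinAt_Ici_integral_of_continuousOn {f : ℝ → E} {a t : ℝ}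
    (hf : ContinuousOn f (Ici a)) (ht : a ≤ t) :
    HasDerivWithinAt (fun u => ∫ s in a..u, f s) (f t) (Ici t) t := by
  have hIoi : Ioi t ⊆ Ici a := fun _ hx => ht.trans (le_of_lt hx)
  refine intervalIntegral.integral_hasDerivWithinAt_right
    (hf.mono ?_).intervalIntegrable ?_ ((hf t ht).mono hIoi)
  · rw [uIcc_of_le ht]
    exact Icc_subset_Ici_self
  · exact AEStronglyMeasurable.stronglyMeasurableAtFilter_of_mem
      (hf.aestronglyMeasurable measurableSet_Ici)
      (Filter.mem_of_superset self_mem_nhdsWithin hIoi)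

theorem eqOn_Ici_of_integral_eq_additive_noise {F : E → E} {K : ℝ≥0} (hF : LipschitzWith K F)
    {N x y : ℝ → E} {a : ℝ} {x₀ : E} (hx : ContinuousOn x (Ici a)) (hy : ContinuousOn y (Ici a))
    (hxeq : ∀ t, a ≤ t → x t = x₀ + (∫ s in a..t, F (x s)) + N t)
    (hyeq : ∀ t, a ≤ t → y t = x₀ + (∫ s in a..t, F (y s)) + N t) :
    EqOn x y (Ici a) := by
  intro T (hT : a ≤ T)
  set u : (ℝ → E) → ℝ → E := fun z t => x₀ + ∫ s in a..t, F (z s)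
  have hv : ∀ t, LipschitzWith K (fun p => F (p + N t)) := fun t => by
    simpa only [mul_one, Function.comp_def] using hF.comp (isometry_add_right (N t)).lipschitz
  have hcont : ∀ z, ContinuousOn z (Ici a) → ContinuousOn (u z) (Icc a T) := fun z hz => by
    have := intervalIntegral.continuousOn_primitive_interval (μ := volume)
      ((hF.continuous.comp_continuousOn hz).mono (uIcc_of_le hT ▸ Icc_subset_Ici_self)
        |>.integrableOn_compact isCompact_uIcc)
    rw [uIcc_of_le hT] at this
    exact continuousOn_const.add this
  have hderiv : ∀ z, ContinuousOn z (Ici a) → (∀ t, a ≤ t → z t = u z t + N t) →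
      ∀ t ∈ Ico a T, HasDerivWithinAt (u z) (F (u z t + N t)) (Ici t) t := by
    intro z hz hzeq t ht
    rw [← hzeq t ht.1]
    exact (hasDerivWithinAt_Ici_integral_of_continuousOn
      (hF.continuous.comp_continuousOn hz) ht.1).const_add x₀
  have huxy : u x T = u y T :=
    ODE_solution_unique hv (hcont x hx) (hderiv x hx hxeq) (hcont y hy) (hderiv y hy hyeq)
      (by simp [u]) ⟨hT, le_rfl⟩
  rw [hxeq T hT, hyeq T hT]
  exact congrArg (· + N T) huxy

end IntegralEquation

def hwDrift (b μ β γ : ℝ) (p : ℝ × ℝ) : ℝ × ℝ :=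
  (b + μ * max (-p.1) p.2, β * max (-(p.1 + p.2)) 0 - γ * p.2)

theorem lipschitzWith_hwDrift (b μ β γ : ℝ) : ∃ K, LipschitzWith K (hwDrift b μ β γ) := by
  have hfst : LipschitzWith 1 (Prod.fst : ℝ × ℝ → ℝ) := LipschitzWith.prod_fst
  have hsnd : LipschitzWith 1 (Prod.snd : ℝ × ℝ → ℝ) := LipschitzWith.prod_snd
  exact ⟨_, ((LipschitzWith.const b).add ((lipschitzWith_smul μ).comp (hfst.neg.max hsnd))).prodMk
    (((lipschitzWith_smul β).comp ((hfst.add hsnd).neg.max_const 0)).sub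
      ((lipschitzWith_smul γ).comp hsnd))⟩

theorem hw_prod_eq_add_integral_hwDrift_add {b σ μ β γ X₀ V₀ : ℝ} {W X V : ℝ → ℝ}
    (hX : ContinuousOn X (Ici 0)) (hV : ContinuousOn V (Ici 0))
    (heqX : ∀ t : ℝ, 0 ≤ t →
      X t = X₀ + (∫ s in (0:ℝ)..t, (b + μ * max (-(X s)) (V s))) + σ * W t)
    (heqV : ∀ t : ℝ, 0 ≤ t →
      V t = V₀ + ∫ s in (0:ℝ)..t, (β * max (-(X s + V s)) 0 - γ * V s))
    {t : ℝ} (ht : 0 ≤ t) :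
    (X t, V t) = (X₀, V₀) + (∫ s in (0:ℝ)..t, hwDrift b μ β γ (X s, V s)) + (σ * W t, 0) := by
  obtain ⟨K, hK⟩ := lipschitzWith_hwDrift b μ β γ
  have hint : IntervalIntegrable (fun s => hwDrift b μ β γ (X s, V s)) volume 0 t :=
    (hK.continuous.comp_continuousOn (hX.prodMk hV)).mono (uIcc_of_le ht ▸ Icc_subset_Ici_self)
      |>.intervalIntegrable
  have hfst : (∫ s in (0:ℝ)..t, hwDrift b μ β γ (X s, V s)).1
      = ∫ s in (0:ℝ)..t, (b + μ * max (-(X s)) (V s)) :=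
    ((ContinuousLinearMap.fst ℝ ℝ ℝ).intervalIntegral_comp_comm hint).symm
  have hsnd : (∫ s in (0:ℝ)..t, hwDrift b μ β γ (X s, V s)).2
      = ∫ s in (0:ℝ)..t, (β * max (-(X s + V s)) 0 - γ * V s) :=
    ((ContinuousLinearMap.snd ℝ ℝ ℝ).intervalIntegral_comp_comm hint).symm
  ext
  · rw [Prod.fst_add, Prod.fst_add, hfst]
    exact heqX t ht
  · rw [Prod.snd_add, Prod.snd_add, hsnd, add_zero]
    exact heqV t ht

theorem hw_limit_pathwise_uniqueness_general
    (b σ μ β γ : ℝ)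
    (W : ℝ → ℝ)
    (X₀ V₀ : ℝ)
    (X V X' V' : ℝ → ℝ)
    (hX : ContinuousOn X (Set.Ici 0)) (hV : ContinuousOn V (Set.Ici 0))
    (hX' : ContinuousOn X' (Set.Ici 0)) (hV' : ContinuousOn V' (Set.Ici 0))
    (heqX : ∀ t : ℝ, 0 ≤ t →
      X t = X₀ + (∫ s in (0:ℝ)..t, (b + μ * max (-(X s)) (V s))) + σ * W t)
    (heqV : ∀ t : ℝ, 0 ≤ t →
      V t = V₀ + ∫ s in (0:ℝ)..t, (β * max (-(X s + V s)) 0 - γ * V s))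
    (heqX' : ∀ t : ℝ, 0 ≤ t →
      X' t = X₀ + (∫ s in (0:ℝ)..t, (b + μ * max (-(X' s)) (V' s))) + σ * W t)
    (heqV' : ∀ t : ℝ, 0 ≤ t →
      V' t = V₀ + ∫ s in (0:ℝ)..t, (β * max (-(X' s + V' s)) 0 - γ * V' s)) :
    ∀ t : ℝ, 0 ≤ t → X t = X' t ∧ V t = V' t := by
  obtain ⟨K, hK⟩ := lipschitzWith_hwDrift b μ β γ
  have hsame : EqOn (fun t => (X t, V t)) (fun t => (X' t, V' t)) (Ici 0) :=
    eqOn_Ici_of_integral_eq_additive_noise hK (hX.prodMk hV) (hX'.prodMk hV')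
      (fun _ ht => hw_prod_eq_add_integral_hwDrift_add hX hV heqX heqV ht)
      (fun _ ht => hw_prod_eq_add_integral_hwDrift_add hX' hV' heqX' heqV' ht)
  exact fun t ht => Prod.ext_iff.1 (hsame ht)

/-- Pathwise uniqueness for the Halfin–Whitt limit system with server vacations:
two continuous solutions `(X, V)` and `(X', V')` of
`X(t) = X₀ + ∫₀ᵗ [b + μ·max(−X(s), V(s))] ds + σW(t)`,
`V(t) = V₀ + ∫₀ᵗ [β·max(−(X(s)+V(s)), 0) − γV(s)] ds`
driven by the same continuous path `W` coincide. -/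
theorem hw_limit_pathwise_uniqueness
    (b σ μ β γ : ℝ) (hμ : 0 < μ) (hβ : 0 < β) (hγ : 0 < γ)
    (W : ℝ → ℝ) (hW : ContinuousOn W (Set.Ici 0)) (hW0 : W 0 = 0)
    (X₀ V₀ : ℝ) (hV₀ : 0 ≤ V₀)
    (X V X' V' : ℝ → ℝ)
    (hX : ContinuousOn X (Set.Ici 0)) (hV : ContinuousOn V (Set.Ici 0))
    (hX' : ContinuousOn X' (Set.Ici 0)) (hV' : ContinuousOn V' (Set.Ici 0))
    (heqX : ∀ t : ℝ, 0 ≤ t →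
      X t = X₀ + (∫ s in (0:ℝ)..t, (b + μ * max (-(X s)) (V s))) + σ * W t)
    (heqV : ∀ t : ℝ, 0 ≤ t →
      V t = V₀ + ∫ s in (0:ℝ)..t, (β * max (-(X s + V s)) 0 - γ * V s))
    (heqX' : ∀ t : ℝ, 0 ≤ t →
      X' t = X₀ + (∫ s in (0:ℝ)..t, (b + μ * max (-(X' s)) (V' s))) + σ * W t)
    (heqV' : ∀ t : ℝ, 0 ≤ t →
      V' t = V₀ + ∫ s in (0:ℝ)..t, (β * max (-(X' s + V' s)) 0 - γ * V' s)) :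
    ∀ t : ℝ, 0 ≤ t → X t = X' t ∧ V t = V' t :=
  hw_limit_pathwise_uniqueness_general b σ μ β γ W X₀ V₀ X V X' V' hX hV hX' hV' heqX heqV heqX'
    heqV'
end

section
/- Fix constants b ∈ ℝ, σ ∈ ℝ, μ > 0, β > 0, γ > 0, a continuous function W : [0,∞) → ℝ with W(0) = 0, and initial values X₀ ≥ 0, V₀ ≥ 0. Suppose (X, V, L) and (X', V', L') are two triples of continuous functions where X, X' : [0,∞) → [0,∞), L is a boundary term for X at zero, L' is a boundary term for X' at zero, and for all t ≥ 0: X(t) = X₀ + ∫₀ᵗ [b + μV(s)] ds + σW(t) + L(t) and V(t) = V₀ − γ∫₀ᵗ V(s) ds + (β/μ)L(t) (and likewise for the primed triple). Then X = X', V = V', and L = L'; i.e., pathwise uniqueness holds for the near-Halfin–Whitt limit system. -/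
open MeasureTheory

/-- `L` is a boundary term for `X` at zero: `L(0) = 0`, `L ≥ 0` and nondecreasing
on `[0,∞)`, and the Lebesgue–Stieltjes measure induced by `L` assigns zero mass
to the set `{t ≥ 0 : X(t) > 0}`. -/
def IsBoundaryTerm (X L : ℝ → ℝ) : Prop :=
  L 0 = 0 ∧ (∀ t : ℝ, 0 ≤ t → 0 ≤ L t) ∧ MonotoneOn L (Set.Ici 0) ∧
  ∃ S : StieltjesFunction ℝ, (∀ t : ℝ, 0 ≤ t → S t = L t) ∧
    (∀ t : ℝ, t ≤ 0 → S t = 0) ∧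
    S.measure {t : ℝ | 0 ≤ t ∧ 0 < X t} = 0

/-! Write `X = ψ + L` with the free path `ψ = X₀ + ∫₀ᵗ (b + μV) + σW`. A boundary term is then the
Skorokhod regulator of `ψ`, and the Skorokhod map is 1-Lipschitz for the sup norm: if `|ψ - ψ'| ≤ ε`
on `[0, t]` then `|L t - L' t| ≤ ε`. For two solutions the free paths differ by `μ ∫₀ˢ (V - V')`, so
`|L t - L' t| ≤ |μ| ∫₀ᵗ |V - V'|`, and the `V` equation gives
`|V t - V' t| ≤ (|γ| + |β / μ| |μ|) ∫₀ᵗ |V - V'|`. Grönwall's inequality forces `V = V'`, and then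
`L = L'` and `X = X'`. -/

open Set

namespace IsBoundaryTerm

variable {X L X' L' ψ ψ' : ℝ → ℝ} {t ε : ℝ}

theorem eq_of_pos_on_Ioc (hL : IsBoundaryTerm X L) {a b : ℝ} (ha : 0 ≤ a) (hab : a ≤ b)
    (hX : ∀ s ∈ Ioc a b, 0 < X s) : L b = L a := by
  obtain ⟨-, -, hmono, S, hSL, -, hS⟩ := hL
  have hnull : S.measure (Ioc a b) = 0 :=
    measure_mono_null (fun s (hs : s ∈ Ioc a b) =>
      (⟨ha.trans hs.1.le, hX s hs⟩ : 0 ≤ s ∧ 0 < X s)) hS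
  rw [StieltjesFunction.measure_Ioc, ENNReal.ofReal_eq_zero, hSL b (ha.trans hab), hSL a ha,
    sub_nonpos] at hnull
  exact le_antisymm hnull (hmono ha (ha.trans hab) hab)

theorem sub_le_of_forall_sub_le (hL : IsBoundaryTerm X L) (ht : 0 ≤ t) (hε : 0 ≤ ε)
    (hL'0 : L' 0 = 0) (hL'mono : MonotoneOn L' (Ici 0))
    (hLc : ContinuousOn L (Icc 0 t)) (hL'c : ContinuousOn L' (Icc 0 t))
    (hX : ∀ s ∈ Icc 0 t, X s = ψ s + L s) (hX' : ∀ s ∈ Icc 0 t, X' s = ψ' s + L' s)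
    (hX'nn : ∀ s ∈ Icc 0 t, 0 ≤ X' s) (hψ : ∀ s ∈ Icc 0 t, ψ' s - ψ s ≤ ε) :
    L t - L' t ≤ ε := by
  set A := Icc 0 t ∩ (fun s => L s - L' s) ⁻¹' Iic ε
  have hA : IsClosed A :=
    (hLc.sub hL'c).preimage_isClosed_of_isClosed isClosed_Icc isClosed_Iic
  have hbdd : BddAbove A := bddAbove_Icc.mono inter_subset_left
  have h0 : 0 ∈ A := ⟨⟨le_rfl, ht⟩, by simp [hL.1, hL'0, hε]⟩
  obtain ⟨⟨hτ0, hτt⟩, hτ⟩ : sSup A ∈ A := hA.csSup_mem ⟨0, h0⟩ hbdd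
  -- Past the last time `sSup A` with `L - L' ≤ ε` the gap forces `X > X' ≥ 0`, so `L` stays flat
  -- on `(sSup A, t]` while `L'` can only grow.
  have hpos : ∀ s ∈ Ioc (sSup A) t, 0 < X s := by
    rintro s ⟨hτs, hst⟩
    have hs : s ∈ Icc 0 t := ⟨hτ0.trans hτs.le, hst⟩
    have hgap : ε < L s - L' s := by
      by_contra! h
      exact hτs.not_ge (le_csSup hbdd ⟨hs, h⟩)
    linarith [hX s hs, hX' s hs, hX'nn s hs, hψ s hs]
  have hτ : L (sSup A) - L' (sSup A) ≤ ε := hτ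
  linarith [hL.eq_of_pos_on_Ioc hτ0 hτt hpos, hL'mono hτ0 (hτ0.trans hτt) hτt]

theorem abs_sub_le_of_forall_abs_sub_le (hL : IsBoundaryTerm X L) (hL' : IsBoundaryTerm X' L')
    (ht : 0 ≤ t)
    (hLc : ContinuousOn L (Icc 0 t)) (hL'c : ContinuousOn L' (Icc 0 t))
    (hX : ∀ s ∈ Icc 0 t, X s = ψ s + L s) (hX' : ∀ s ∈ Icc 0 t, X' s = ψ' s + L' s)
    (hXnn : ∀ s ∈ Icc 0 t, 0 ≤ X s) (hX'nn : ∀ s ∈ Icc 0 t, 0 ≤ X' s)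
    (hψ : ∀ s ∈ Icc 0 t, |ψ s - ψ' s| ≤ ε) :
    |L t - L' t| ≤ ε := by
  have hε : 0 ≤ ε := (abs_nonneg _).trans (hψ 0 ⟨le_rfl, ht⟩)
  exact abs_sub_le_iff.mpr
    ⟨hL.sub_le_of_forall_sub_le ht hε hL'.1 hL'.2.2.1 hLc hL'c hX hX' hX'nn
      fun s hs => (abs_sub_le_iff.mp (hψ s hs)).2,
    hL'.sub_le_of_forall_sub_le ht hε hL.1 hL.2.2.1 hL'c hLc hX' hX hXnn
      fun s hs => (abs_sub_le_iff.mp (hψ s hs)).1⟩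

end IsBoundaryTerm

theorem eqOn_zero_of_norm_le_mul_integral_norm {E : Type*} [NormedAddCommGroup E] {f : ℝ → E}
    {K : ℝ} (hf : ContinuousOn f (Ici 0))
    (hbound : ∀ t, 0 ≤ t → ‖f t‖ ≤ K * ∫ s in (0 : ℝ)..t, ‖f s‖) :
    EqOn f 0 (Ici 0) := by
  intro t (ht : 0 ≤ t)
  have hnorm : ContinuousOn (fun s => ‖f s‖) (Ici 0) := hf.norm
  have hF_nonneg : ∀ u, 0 ≤ u → 0 ≤ ∫ s in (0 : ℝ)..u, ‖f s‖ :=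
    fun u hu => intervalIntegral.integral_nonneg hu fun s _ => norm_nonneg _
  have hF_cont : ContinuousOn (fun u => ∫ s in (0 : ℝ)..u, ‖f s‖) (Icc 0 t) := by
    simpa only [uIcc_of_le ht] using intervalIntegral.continuousOn_primitive_interval'
      ((hnorm.mono Icc_subset_Ici_self).intervalIntegrable_of_Icc ht) left_mem_uIcc
  have hF_deriv : ∀ u ∈ Ico 0 t,
      HasDerivWithinAt (fun u => ∫ s in (0 : ℝ)..u, ‖f s‖) ‖f u‖ (Ici u) u := by
    intro u hu
    have hIoi : Ioi u ⊆ Ici 0 := Ioi_subset_Ici hu.1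
    exact intervalIntegral.integral_hasDerivWithinAt_right
      ((hnorm.mono Icc_subset_Ici_self).intervalIntegrable_of_Icc hu.1)
      ((hnorm.mono hIoi).stronglyMeasurableAtFilter_nhdsWithin measurableSet_Ioi u)
      ((hnorm u hu.1).mono hIoi)
  have hF_zero := eq_zero_of_abs_deriv_le_mul_abs_self_of_eq_zero_right hF_cont hF_deriv
    intervalIntegral.integral_same fun u hu => by
      rw [norm_norm, Real.norm_of_nonneg (hF_nonneg u hu.1)]
      exact hbound u hu.1
  simpa [hF_zero t ⟨ht, le_rfl⟩] using hbound t ht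

namespace intervalIntegral

theorem integral_const_add_mul {f : ℝ → ℝ} {a b c d : ℝ} (hf : IntervalIntegrable f volume a b) :
    ∫ x in a..b, (c + d * f x) = (b - a) * c + d * ∫ x in a..b, f x := by
  rw [integral_add intervalIntegrable_const (hf.const_mul d), integral_const, integral_const_mul,
    smul_eq_mul]

theorem abs_integral_sub_integral_le {f g : ℝ → ℝ} {a s t : ℝ} (has : a ≤ s) (hst : s ≤ t)
    (hf : IntervalIntegrable f volume a t) (hg : IntervalIntegrable g volume a t) :
    |(∫ x in a..s, f x) - ∫ x in a..s, g x| ≤ ∫ x in a..t, |f x - g x| := by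
  have hsub : uIcc a s ⊆ uIcc a t := uIcc_subset_uIcc_left (mem_uIcc_of_le has hst)
  rw [← integral_sub (hf.mono_set hsub) (hg.mono_set hsub)]
  calc _ ≤ ∫ x in a..s, |f x - g x| := abs_integral_le_integral_abs has
    _ ≤ _ := integral_mono_interval le_rfl has hst (ae_of_all _ fun x => abs_nonneg _)
        (hf.sub hg).abs

end intervalIntegral

open intervalIntegral in
theorem near_hw_limit_pathwise_uniqueness_general
    (b σ μ β γ : ℝ)
    (W : ℝ → ℝ)
    (X₀ V₀ : ℝ)
    (X V L X' V' L' : ℝ → ℝ)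
    (hV : ContinuousOn V (Set.Ici 0))
    (hL : ContinuousOn L (Set.Ici 0))
    (hV' : ContinuousOn V' (Set.Ici 0))
    (hL' : ContinuousOn L' (Set.Ici 0))
    (hXnn : ∀ t : ℝ, 0 ≤ t → 0 ≤ X t) (hXnn' : ∀ t : ℝ, 0 ≤ t → 0 ≤ X' t)
    (hbdry : IsBoundaryTerm X L) (hbdry' : IsBoundaryTerm X' L')
    (heqX : ∀ t : ℝ, 0 ≤ t →
      X t = X₀ + (∫ s in (0:ℝ)..t, (b + μ * V s)) + σ * W t + L t)
    (heqV : ∀ t : ℝ, 0 ≤ t →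
      V t = V₀ - γ * (∫ s in (0:ℝ)..t, V s) + (β / μ) * L t)
    (heqX' : ∀ t : ℝ, 0 ≤ t →
      X' t = X₀ + (∫ s in (0:ℝ)..t, (b + μ * V' s)) + σ * W t + L' t)
    (heqV' : ∀ t : ℝ, 0 ≤ t →
      V' t = V₀ - γ * (∫ s in (0:ℝ)..t, V' s) + (β / μ) * L' t) :
    ∀ t : ℝ, 0 ≤ t → X t = X' t ∧ V t = V' t ∧ L t = L' t := by
  have hVi : ∀ t, 0 ≤ t → IntervalIntegrable V volume 0 t :=
    fun t ht => (hV.mono Icc_subset_Ici_self).intervalIntegrable_of_Icc ht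
  have hV'i : ∀ t, 0 ≤ t → IntervalIntegrable V' volume 0 t :=
    fun t ht => (hV'.mono Icc_subset_Ici_self).intervalIntegrable_of_Icc ht
  set I : ℝ → ℝ := fun t => ∫ u in (0:ℝ)..t, |V u - V' u|
  have hintegral_le : ∀ s t, 0 ≤ s → s ≤ t →
      |(∫ u in (0:ℝ)..s, V u) - ∫ u in (0:ℝ)..s, V' u| ≤ I t := fun s t hs hst =>
    abs_integral_sub_integral_le hs hst (hVi t (hs.trans hst)) (hV'i t (hs.trans hst))
  have hL_le : ∀ t, 0 ≤ t → |L t - L' t| ≤ |μ| * I t := by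
    intro t ht
    refine hbdry.abs_sub_le_of_forall_abs_sub_le hbdry' ht (hL.mono Icc_subset_Ici_self)
      (hL'.mono Icc_subset_Ici_self)
      (fun s hs => heqX s hs.1) (fun s hs => heqX' s hs.1) (fun s hs => hXnn s hs.1)
      (fun s hs => hXnn' s hs.1) fun s hs => ?_
    rw [add_sub_add_right_eq_sub, add_sub_add_left_eq_sub, integral_const_add_mul (hVi s hs.1),
      integral_const_add_mul (hV'i s hs.1), add_sub_add_left_eq_sub, ← mul_sub, abs_mul]
    exact mul_le_mul_of_nonneg_left (hintegral_le s t hs.1 hs.2) (abs_nonneg μ)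
  have hV_le : ∀ t, 0 ≤ t → |V t - V' t| ≤ (|γ| + |β / μ| * |μ|) * I t := by
    intro t ht
    have hdiff : V t - V' t = -γ * ((∫ u in (0:ℝ)..t, V u) - ∫ u in (0:ℝ)..t, V' u) +
        β / μ * (L t - L' t) := by
      rw [heqV t ht, heqV' t ht]; ring
    calc |V t - V' t|
        ≤ |γ| * |(∫ u in (0:ℝ)..t, V u) - ∫ u in (0:ℝ)..t, V' u| + |β / μ| * |L t - L' t| := by
          rw [hdiff, ← abs_neg γ, ← abs_mul, ← abs_mul]; exact abs_add_le _ _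
      _ ≤ |γ| * I t + |β / μ| * (|μ| * I t) := by
          gcongr
          exacts [hintegral_le t t ht le_rfl, hL_le t ht]
      _ = _ := by ring
  have hV_eq : EqOn (fun t => V t - V' t) 0 (Ici 0) :=
    eqOn_zero_of_norm_le_mul_integral_norm (hV.sub hV')
      (by simpa only [Real.norm_eq_abs] using hV_le)
  intro t ht
  have hI : I t = 0 := by
    refine (integral_congr (g := fun _ => 0) fun u hu => ?_).trans intervalIntegral.integral_zero
    rw [uIcc_of_le ht] at hu
    simpa using hV_eq hu.1
  have hintegral_eq : ∫ u in (0:ℝ)..t, V u = ∫ u in (0:ℝ)..t, V' u :=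
    sub_eq_zero.mp (abs_nonpos_iff.mp ((hintegral_le t t ht le_rfl).trans_eq hI))
  have hL_eq : L t = L' t :=
    sub_eq_zero.mp (abs_nonpos_iff.mp ((hL_le t ht).trans_eq (by rw [hI, mul_zero])))
  refine ⟨?_, sub_eq_zero.mp (hV_eq ht), hL_eq⟩
  rw [heqX t ht, heqX' t ht, integral_const_add_mul (hVi t ht), integral_const_add_mul (hV'i t ht),
    hintegral_eq, hL_eq]

/-- Pathwise uniqueness for the near-Halfin–Whitt limit system with server
vacations: two continuous solutions `(X, V, L)` and `(X', V', L')` of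
`X(t) = X₀ + ∫₀ᵗ [b + μV(s)] ds + σW(t) + L(t)`,
`V(t) = V₀ − γ∫₀ᵗ V(s) ds + (β/μ)L(t)`,
with `X, X' ≥ 0` and `L, L'` boundary terms at zero, coincide. -/
theorem near_hw_limit_pathwise_uniqueness
    (b σ μ β γ : ℝ) (hμ : 0 < μ) (hβ : 0 < β) (hγ : 0 < γ)
    (W : ℝ → ℝ) (hW : ContinuousOn W (Set.Ici 0)) (hW0 : W 0 = 0)
    (X₀ V₀ : ℝ) (hX₀ : 0 ≤ X₀) (hV₀ : 0 ≤ V₀)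
    (X V L X' V' L' : ℝ → ℝ)
    (hX : ContinuousOn X (Set.Ici 0)) (hV : ContinuousOn V (Set.Ici 0))
    (hL : ContinuousOn L (Set.Ici 0))
    (hX' : ContinuousOn X' (Set.Ici 0)) (hV' : ContinuousOn V' (Set.Ici 0))
    (hL' : ContinuousOn L' (Set.Ici 0))
    (hXnn : ∀ t : ℝ, 0 ≤ t → 0 ≤ X t) (hXnn' : ∀ t : ℝ, 0 ≤ t → 0 ≤ X' t)
    (hbdry : IsBoundaryTerm X L) (hbdry' : IsBoundaryTerm X' L')
    (heqX : ∀ t : ℝ, 0 ≤ t →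
      X t = X₀ + (∫ s in (0:ℝ)..t, (b + μ * V s)) + σ * W t + L t)
    (heqV : ∀ t : ℝ, 0 ≤ t →
      V t = V₀ - γ * (∫ s in (0:ℝ)..t, V s) + (β / μ) * L t)
    (heqX' : ∀ t : ℝ, 0 ≤ t →
      X' t = X₀ + (∫ s in (0:ℝ)..t, (b + μ * V' s)) + σ * W t + L' t)
    (heqV' : ∀ t : ℝ, 0 ≤ t →
      V' t = V₀ - γ * (∫ s in (0:ℝ)..t, V' s) + (β / μ) * L' t) :
    ∀ t : ℝ, 0 ≤ t → X t = X' t ∧ V t = V' t ∧ L t = L' t :=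
  near_hw_limit_pathwise_uniqueness_general b σ μ β γ W X₀ V₀ X V L X' V' L' hV hL hV' hL' hXnn
    hXnn' hbdry hbdry' heqX heqV heqX' heqV'
end

section
/- Fix constants b ∈ ℝ, σ ∈ ℝ, μ > 0, β > 0, γ > 0, a continuous function W : [0,∞) → ℝ with W(0) = 0, and initial values X₀ ≥ 0, V₀ ≥ 0. Then there exists a triple (X, V, L) of continuous functions with X : [0,∞) → [0,∞) and L a boundary term for X at zero, such that for all t ≥ 0: X(t) = X₀ + ∫₀ᵗ [b + μV(s)] ds + σW(t) + L(t) and V(t) = V₀ − γ∫₀ᵗ V(s) ds + (β/μ)L(t). -/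
/-!
For a fixed vacation path `V` the queue equation is a one-sided Skorokhod problem: with net input
`Z(t) = X₀ + ∫₀ᵗ (b + μ V) + σ W(t)`, the regulator `L(t) = sup_{s ≤ t} (-Z s)⁺` makes `X = Z + L`
nonnegative and is flat wherever `X > 0`, so its Stieltjes measure does not charge `{X > 0}`.
Substituting `L` into the `V`-equation leaves a fixed-point problem `V = Φ V`. Since the
Skorokhod map is 1-Lipschitz in the sup norm, a bound `|V₁ - V₂| ≤ B` on `[0, t]` gives
`|Φ V₁ t - Φ V₂ t| ≤ (γ + β) ∫₀ᵗ B`, so successive Picard iterates differ by at most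
`C ((γ + β) t)ⁿ / n!` and converge locally uniformly to a continuous fixed point.
-/

open MeasureTheory

open Set Filter Topology

noncomputable def runningSup (h : ℝ → ℝ) (t : ℝ) : ℝ := sSup (h '' Icc 0 t)

section runningSup

variable {h h₁ h₂ : ℝ → ℝ}

lemma le_runningSup (hc : Continuous h) {s t : ℝ} (hs : s ∈ Icc 0 t) : h s ≤ runningSup h t :=
  le_csSup (isCompact_Icc.image hc).bddAbove (mem_image_of_mem h hs)

lemma runningSup_le {c t : ℝ} (ht : 0 ≤ t) (hb : ∀ s ∈ Icc 0 t, h s ≤ c) : runningSup h t ≤ c :=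
  csSup_le ((nonempty_Icc.2 ht).image h) (forall_mem_image.2 hb)

lemma runningSup_of_neg {t : ℝ} (ht : t < 0) : runningSup h t = 0 := by
  rw [runningSup, Icc_eq_empty_of_lt ht, image_empty, Real.sSup_empty]

lemma runningSup_zero : runningSup h 0 = h 0 := by
  rw [runningSup, Icc_self, image_singleton, csSup_singleton]

lemma runningSup_nonneg (hc : Continuous h) (h0 : 0 ≤ h 0) (t : ℝ) : 0 ≤ runningSup h t := by
  rcases lt_or_ge t 0 with ht | ht
  · rw [runningSup_of_neg ht]
  · exact h0.trans (le_runningSup hc ⟨le_rfl, ht⟩)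

lemma runningSup_mono (hc : Continuous h) (h0 : 0 ≤ h 0) : Monotone (runningSup h) := by
  intro s t hst
  rcases lt_or_ge s 0 with hs | hs
  · rw [runningSup_of_neg hs]
    exact runningSup_nonneg hc h0 t
  · exact runningSup_le hs fun u hu => le_runningSup hc ⟨hu.1, hu.2.trans hst⟩

lemma runningSup_eq_sSup_image_Icc_zero_one (h0 : h 0 = 0) (t : ℝ) :
    runningSup h t = sSup ((fun u => h (u * max t 0)) '' Icc 0 1) := by
  rcases lt_or_ge t 0 with ht | ht
  · rw [runningSup_of_neg ht, max_eq_right ht.le]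
    simp [h0, (nonempty_Icc.2 zero_le_one).image_const]
  · rw [max_eq_left ht, runningSup, ← image_image h (· * t), image_mul_right_Icc zero_le_one ht,
      zero_mul, one_mul]

/-- Reparametrising `[0, t]` as `t • [0, 1]` turns this into a supremum over a fixed compact set. -/
lemma continuous_runningSup (hc : Continuous h) (h0 : h 0 = 0) : Continuous (runningSup h) := by
  rw [funext (runningSup_eq_sSup_image_Icc_zero_one h0)]
  exact isCompact_Icc.continuous_sSup (by fun_prop)

lemma abs_runningSup_sub_le (hc₁ : Continuous h₁) (hc₂ : Continuous h₂) {t ε : ℝ} (ht : 0 ≤ t)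
    (hd : ∀ s ∈ Icc 0 t, |h₁ s - h₂ s| ≤ ε) : |runningSup h₁ t - runningSup h₂ t| ≤ ε := by
  rw [abs_sub_le_iff, sub_le_iff_le_add, sub_le_iff_le_add]
  constructor
  · refine runningSup_le ht fun s hs => ?_
    linarith [(abs_sub_le_iff.1 (hd s hs)).1, le_runningSup hc₂ hs]
  · refine runningSup_le ht fun s hs => ?_
    linarith [(abs_sub_le_iff.1 (hd s hs)).2, le_runningSup hc₁ hs]

end runningSup

theorem StieltjesFunction.measure_eq_zero_of_forall_eventually_eq (f : StieltjesFunction ℝ)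
    {s : Set ℝ} (hs : ∀ x ∈ s, ∀ᶠ y in 𝓝 x, f y = f x) : f.measure s = 0 := by
  refine measure_null_of_locally_null s fun x hx => ?_
  obtain ⟨ε, hε, hf⟩ := Metric.eventually_nhds_iff.1 (hs x hx)
  have hdist : ∀ y ∈ Icc (x - ε / 2) (x + ε / 2), dist y x < ε := fun y hy => by
    rw [Real.dist_eq, abs_lt]
    constructor <;> linarith [hy.1, hy.2]
  refine ⟨Ioc (x - ε / 2) (x + ε / 2),
    mem_nhdsWithin_of_mem_nhds (Ioc_mem_nhds (by linarith) (by linarith)), ?_⟩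
  rw [f.measure_Ioc, hf (hdist _ ⟨by linarith, le_rfl⟩), hf (hdist _ ⟨le_rfl, by linarith⟩),
    sub_self, ENNReal.ofReal_zero]

noncomputable def skorokhodRegulator (z : ℝ → ℝ) : ℝ → ℝ :=
  runningSup fun s => max (-z s) 0

section skorokhodRegulator

variable {z z₁ z₂ : ℝ → ℝ}

lemma continuous_skorokhodRegulator (hz : Continuous z) (hz0 : 0 ≤ z 0) :
    Continuous (skorokhodRegulator z) :=
  continuous_runningSup (hz.neg.max continuous_const) (max_eq_right (neg_nonpos.2 hz0))

lemma monotone_skorokhodRegulator (hz : Continuous z) : Monotone (skorokhodRegulator z) :=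
  runningSup_mono (hz.neg.max continuous_const) (le_max_right _ _)

lemma skorokhodRegulator_nonneg (hz : Continuous z) (t : ℝ) : 0 ≤ skorokhodRegulator z t :=
  runningSup_nonneg (hz.neg.max continuous_const) (le_max_right _ _) t

lemma skorokhodRegulator_of_nonpos (hz0 : 0 ≤ z 0) {t : ℝ} (ht : t ≤ 0) :
    skorokhodRegulator z t = 0 := by
  rcases ht.lt_or_eq with ht | rfl
  · exact runningSup_of_neg ht
  · exact runningSup_zero.trans (max_eq_right (neg_nonpos.2 hz0))

lemma add_skorokhodRegulator_nonneg (hz : Continuous z) {t : ℝ} (ht : 0 ≤ t) :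
    0 ≤ z t + skorokhodRegulator z t := by
  have hH : Continuous fun s => max (-z s) 0 := hz.neg.max continuous_const
  have : max (-z t) 0 ≤ skorokhodRegulator z t := le_runningSup hH ⟨ht, le_rfl⟩
  linarith [le_max_left (-z t) 0]

/-- The supremum over `[0, c]` is attained at some `u`; if `u ∈ [a, c]`, then `z u + L u > 0`
forces `(-z u)⁺ = 0`. -/
lemma skorokhodRegulator_eq_of_pos (hz : Continuous z) {a c : ℝ}
    (hpos : ∀ u ∈ uIcc a c, 0 ≤ u → 0 < z u + skorokhodRegulator z u) :
    skorokhodRegulator z c = skorokhodRegulator z a := by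
  wlog hac : a ≤ c generalizing a c
  · exact (this (fun u hu => hpos u (uIcc_comm a c ▸ hu)) (le_of_not_ge hac)).symm
  have hH : Continuous fun s => max (-z s) 0 := hz.neg.max continuous_const
  refine le_antisymm ?_ (monotone_skorokhodRegulator hz hac)
  rcases lt_or_ge c 0 with hc | hc
  · rw [skorokhodRegulator, runningSup_of_neg hc]
    exact skorokhodRegulator_nonneg hz a
  obtain ⟨u, hu, hmax⟩ :=
    isCompact_Icc.exists_isMaxOn (nonempty_Icc.2 hc) hH.continuousOn
  have hLc : skorokhodRegulator z c ≤ max (-z u) 0 := runningSup_le hc fun s hs => hmax hs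
  rcases le_or_gt u a with hua | hua
  · exact hLc.trans (le_runningSup hH ⟨hu.1, hua⟩)
  · have hLu : skorokhodRegulator z u ≤ max (-z u) 0 :=
      (monotone_skorokhodRegulator hz hu.2).trans hLc
    have hzu := hpos u (uIcc_of_le hac ▸ ⟨hua.le, hu.2⟩) hu.1
    have hneg : -z u < 0 :=
      (lt_max_iff.1 (show -z u < max (-z u) 0 by linarith)).resolve_left (lt_irrefl _)
    exact (hLc.trans (max_eq_right hneg.le).le).trans (skorokhodRegulator_nonneg hz a)

lemma abs_skorokhodRegulator_sub_le (hz₁ : Continuous z₁) (hz₂ : Continuous z₂) {t ε : ℝ}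
    (ht : 0 ≤ t) (hd : ∀ s ∈ Icc 0 t, |z₁ s - z₂ s| ≤ ε) :
    |skorokhodRegulator z₁ t - skorokhodRegulator z₂ t| ≤ ε := by
  refine abs_runningSup_sub_le (hz₁.neg.max continuous_const) (hz₂.neg.max continuous_const) ht
    fun s hs => (abs_max_sub_max_le_abs _ _ 0).trans ?_
  simpa only [Pi.neg_apply, neg_sub_neg, abs_sub_comm] using hd s hs

theorem isBoundaryTerm_skorokhodRegulator (hz : Continuous z) (hz0 : 0 ≤ z 0) :
    IsBoundaryTerm (z + skorokhodRegulator z) (skorokhodRegulator z) := by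
  have hL := continuous_skorokhodRegulator hz hz0
  refine ⟨skorokhodRegulator_of_nonpos hz0 le_rfl, fun t _ => skorokhodRegulator_nonneg hz t,
    (monotone_skorokhodRegulator hz).monotoneOn _,
    ⟨skorokhodRegulator z, monotone_skorokhodRegulator hz,
      fun x => hL.continuousAt.continuousWithinAt⟩,
    fun _ _ => rfl, fun _ ht => skorokhodRegulator_of_nonpos hz0 ht, ?_⟩
  refine StieltjesFunction.measure_eq_zero_of_forall_eventually_eq _ ?_
  rintro x ⟨-, hx⟩
  obtain ⟨ε, hε, hball⟩ := Metric.isOpen_iff.1 (isOpen_lt continuous_const (hz.add hL)) x hx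
  filter_upwards [Metric.ball_mem_nhds x hε] with y hy
  refine skorokhodRegulator_eq_of_pos hz fun u hu _ => hball ?_
  have hx' := Metric.mem_ball_self (x := x) hε
  rw [Real.ball_eq_Ioo] at hy hx' ⊢
  exact ordConnected_Ioo.uIcc_subset hx' hy hu

end skorokhodRegulator

lemma tendstoUniformlyOn_of_norm_sub_le_summable {β F : Type*} [NormedAddCommGroup F]
    [CompleteSpace F] {f : ℕ → β → F} {u : ℕ → ℝ} (hu : Summable u) {s : Set β}
    (hf : ∀ n, ∀ x ∈ s, ‖f (n + 1) x - f n x‖ ≤ u n) :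
    TendstoUniformlyOn f (fun x => f 0 x + ∑' n, (f (n + 1) x - f n x)) atTop s := by
  have hsum := tendstoUniformlyOn_tsum_nat hu hf
  rw [Metric.tendstoUniformlyOn_iff] at hsum ⊢
  intro ε hε
  filter_upwards [hsum ε hε] with N hN x hx
  simpa [Finset.sum_range_sub fun n => f n x, dist_add_left, add_comm] using hN x hx

lemma mul_integral_mul_pow_div_factorial (C K t : ℝ) (n : ℕ) :
    K * ∫ s in (0 : ℝ)..t, C * (K * s) ^ n / n.factorial
      = C * (K * t) ^ (n + 1) / (n + 1).factorial := by
  simp_rw [mul_pow, mul_div_assoc, ← mul_assoc, mul_comm _ ((_ : ℝ) ^ n), mul_assoc,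
    intervalIntegral.integral_const_mul, div_eq_mul_inv, intervalIntegral.integral_mul_const,
    integral_pow]
  rw [Nat.factorial_succ]
  push_cast
  field_simp
  ring

def IsVolterraLipschitz (Φ : (ℝ → ℝ) → ℝ → ℝ) (K : ℝ) : Prop :=
  ∀ ⦃V₁ V₂ B : ℝ → ℝ⦄, Continuous V₁ → Continuous V₂ → Continuous B → ∀ ⦃t : ℝ⦄, 0 ≤ t →
    (∀ s ∈ Icc 0 t, |V₁ s - V₂ s| ≤ B s) → |Φ V₁ t - Φ V₂ t| ≤ K * ∫ s in (0 : ℝ)..t, B s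

section Picard

variable {Φ : (ℝ → ℝ) → ℝ → ℝ} {c K : ℝ}

lemma IsVolterraLipschitz.tendsto_apply (hΦ : IsVolterraLipschitz Φ K) (hK : 0 ≤ K)
    {F : ℕ → ℝ → ℝ} {V : ℝ → ℝ} (hF : ∀ n, Continuous (F n)) (hV : Continuous V) {t : ℝ}
    (ht : 0 ≤ t) (hFV : TendstoUniformlyOn F V atTop (Icc 0 t)) :
    Tendsto (fun n => Φ (F n) t) atTop (𝓝 (Φ V t)) := by
  rw [Metric.tendsto_nhds]
  intro ε hε
  have hδ : 0 < ε / (K * t + 1) := div_pos hε (by positivity)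
  filter_upwards [Metric.tendstoUniformlyOn_iff.1 hFV _ hδ] with n hn
  have hbd := hΦ (hF n) hV continuous_const ht fun s hs => by
    rw [← Real.dist_eq, dist_comm]; exact (hn s hs).le
  rw [intervalIntegral.integral_const, smul_eq_mul, sub_zero] at hbd
  rw [Real.dist_eq]
  calc _ ≤ K * (t * (ε / (K * t + 1))) := hbd
    _ < (K * t + 1) * (ε / (K * t + 1)) := by nlinarith
    _ = ε := mul_div_cancel₀ _ (by positivity)

variable (Φ c) in
noncomputable def picardIterate (n : ℕ) : ℝ → ℝ := Φ^[n] fun _ => c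

lemma picardIterate_succ (n : ℕ) : picardIterate Φ c (n + 1) = Φ (picardIterate Φ c n) :=
  Function.iterate_succ_apply' _ _ _

lemma continuous_picardIterate (hcont : ∀ V, Continuous V → Continuous (Φ V)) (n : ℕ) :
    Continuous (picardIterate Φ c n) := by
  induction n with
  | zero => exact continuous_const
  | succ n ih => exact picardIterate_succ n ▸ hcont _ ih

lemma picardIterate_of_nonpos (hinit : ∀ V t, t ≤ 0 → Φ V t = c) (n : ℕ) {t : ℝ} (ht : t ≤ 0) :
    picardIterate Φ c n t = c := by
  cases n with
  | zero => rfl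
  | succ n => rw [picardIterate_succ, hinit _ _ ht]

lemma abs_picardIterate_succ_sub_le (hΦ : IsVolterraLipschitz Φ K)
    (hcont : ∀ V, Continuous V → Continuous (Φ V)) (T : ℝ) :
    ∃ C, ∀ n, ∀ t ∈ Icc 0 T,
      |picardIterate Φ c (n + 1) t - picardIterate Φ c n t| ≤ C * (K * t) ^ n / n.factorial := by
  obtain ⟨C, hC⟩ := isCompact_Icc.exists_bound_of_continuousOn
    ((continuous_picardIterate hcont 1).sub (continuous_picardIterate hcont 0)).continuousOn
    (s := Icc 0 T)
  refine ⟨C, fun n => ?_⟩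
  induction n with
  | zero => simpa using hC
  | succ n ih =>
    intro t ht
    have h := hΦ (continuous_picardIterate hcont _) (continuous_picardIterate hcont _)
      (by fun_prop) ht.1 fun s hs => ih s ⟨hs.1, hs.2.trans ht.2⟩
    rwa [← picardIterate_succ (Φ := Φ), ← picardIterate_succ (Φ := Φ),
      mul_integral_mul_pow_div_factorial] at h

variable (Φ c) in
noncomputable def picardLimit (x : ℝ) : ℝ :=
  c + ∑' n, (picardIterate Φ c (n + 1) x - picardIterate Φ c n x)

lemma tendstoLocallyUniformly_picardIterate (hΦ : IsVolterraLipschitz Φ K) (hK : 0 ≤ K)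
    (hcont : ∀ V, Continuous V → Continuous (Φ V)) (hinit : ∀ V t, t ≤ 0 → Φ V t = c) :
    TendstoLocallyUniformly (picardIterate Φ c) (picardLimit Φ c) atTop := by
  refine tendstoLocallyUniformly_iff_forall_isCompact.2 fun S hS => ?_
  obtain ⟨T₀, hT₀⟩ := hS.bddAbove
  set T := max T₀ 0
  obtain ⟨C, hC⟩ := abs_picardIterate_succ_sub_le (c := c) hΦ hcont T
  have hC0 : 0 ≤ C := (abs_nonneg _).trans ((hC 0 0 ⟨le_rfl, le_max_right _ _⟩).trans (by simp))
  have hsum : Summable fun n : ℕ => C * (K * T) ^ n / n.factorial := by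
    simpa only [mul_div_assoc] using (Real.summable_pow_div_factorial (K * T)).mul_left C
  refine (tendstoUniformlyOn_of_norm_sub_le_summable hsum fun n t (ht : t ≤ T) => ?_).mono
    fun x hx => (hT₀ hx).trans (le_max_left _ _)
  rcases le_or_gt t 0 with ht0 | ht0
  · simp only [picardIterate_of_nonpos hinit _ ht0, sub_self, norm_zero]
    positivity
  · exact (hC n t ⟨ht0.le, ht⟩).trans (by gcongr)

theorem IsVolterraLipschitz.exists_continuous_fixedPoint (hΦ : IsVolterraLipschitz Φ K)
    (hK : 0 ≤ K) (hcont : ∀ V, Continuous V → Continuous (Φ V))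
    (hinit : ∀ V t, t ≤ 0 → Φ V t = c) :
    ∃ V, Continuous V ∧ Φ V = V := by
  have hF := continuous_picardIterate (c := c) hcont
  have hlim := tendstoLocallyUniformly_picardIterate hΦ hK hcont hinit
  have hV : Continuous (picardLimit Φ c) := hlim.continuous (Frequently.of_forall hF)
  refine ⟨picardLimit Φ c, hV, funext fun t =>
    tendsto_nhds_unique (f := fun n => picardIterate Φ c (n + 1) t) (l := atTop) ?_ ?_⟩
  · simp only [picardIterate_succ]
    rcases le_or_gt t 0 with ht | ht
    · simp only [hinit _ _ ht]
      exact tendsto_const_nhds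
    · exact hΦ.tendsto_apply hK hF hV ht.le
        (tendstoLocallyUniformly_iff_forall_isCompact.1 hlim _ isCompact_Icc)
  · exact ((tendstoLocallyUniformly_iff_forall_isCompact.1 hlim _ isCompact_singleton).tendsto_at
      rfl).comp (tendsto_add_atTop_nat 1)

end Picard

lemma abs_intervalIntegral_sub_le_of_le {f g B : ℝ → ℝ} (hf : Continuous f) (hg : Continuous g)
    (hB : Continuous B) {a s t : ℝ} (has : a ≤ s) (hst : s ≤ t)
    (hbd : ∀ u ∈ Icc a t, |f u - g u| ≤ B u) :
    |(∫ u in a..s, f u) - ∫ u in a..s, g u| ≤ ∫ u in a..t, B u := by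
  have hB0 : ∀ u ∈ Icc a t, 0 ≤ B u := fun u hu => (abs_nonneg _).trans (hbd u hu)
  rw [← intervalIntegral.integral_sub (hf.intervalIntegrable a s) (hg.intervalIntegrable a s)]
  calc _ ≤ ∫ u in a..s, |f u - g u| := intervalIntegral.abs_integral_le_integral_abs has
    _ ≤ ∫ u in a..s, B u := intervalIntegral.integral_mono_on has
        ((hf.sub hg).abs.intervalIntegrable a s) (hB.intervalIntegrable a s)
        fun u hu => hbd u ⟨hu.1, hu.2.trans hst⟩
    _ ≤ ∫ u in a..t, B u := intervalIntegral.integral_mono_interval le_rfl has hst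
        (ae_restrict_of_forall_mem measurableSet_Ioc fun u hu => hB0 u ⟨hu.1.le, hu.2⟩)
        (hB.intervalIntegrable a t)

lemma continuous_intervalIntegral_zero_max {f : ℝ → ℝ} (hf : Continuous f) :
    Continuous fun t => ∫ s in (0 : ℝ)..max t 0, f s :=
  (intervalIntegral.continuous_primitive (fun _ _ => hf.intervalIntegrable _ _) 0).comp
    (continuous_id.max continuous_const)

section NearHalfinWhitt

variable (b σ μ β γ X₀ V₀ : ℝ) (W : ℝ → ℝ)

/-- Time is clamped at `0`, so that `nhwOperator` is constant on `t ≤ 0`. -/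
noncomputable def nhwNetInput (V : ℝ → ℝ) (t : ℝ) : ℝ :=
  X₀ + (∫ s in (0 : ℝ)..max t 0, (b + μ * V s)) + σ * W (max t 0)

noncomputable def nhwOperator (V : ℝ → ℝ) (t : ℝ) : ℝ :=
  V₀ - γ * (∫ s in (0 : ℝ)..max t 0, V s) +
    (β / μ) * skorokhodRegulator (nhwNetInput b σ μ X₀ W V) t

variable {b σ μ β γ X₀ V₀ W} {V : ℝ → ℝ}

lemma continuous_nhwNetInput (hW : ContinuousOn W (Ici 0)) (hV : Continuous V) :
    Continuous (nhwNetInput b σ μ X₀ W V) := by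
  have hI := continuous_intervalIntegral_zero_max (by fun_prop : Continuous fun s => b + μ * V s)
  exact (continuous_const.add hI).add (continuous_const.mul
    (hW.comp_continuous (continuous_id.max continuous_const) fun t => le_max_right t 0))

lemma nhwNetInput_zero (hW0 : W 0 = 0) : nhwNetInput b σ μ X₀ W V 0 = X₀ := by
  simp [nhwNetInput, hW0]

lemma continuous_nhwOperator (hW : ContinuousOn W (Ici 0)) (hW0 : W 0 = 0) (hX₀ : 0 ≤ X₀)
    (hV : Continuous V) : Continuous (nhwOperator b σ μ β γ X₀ V₀ W V) := by
  have hL := continuous_skorokhodRegulator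
    (continuous_nhwNetInput (b := b) (σ := σ) (μ := μ) hW hV) (hX₀.trans (nhwNetInput_zero hW0).ge)
  exact (continuous_const.sub (continuous_const.mul (continuous_intervalIntegral_zero_max hV))).add
    (continuous_const.mul hL)

lemma nhwOperator_of_nonpos (hW0 : W 0 = 0) (hX₀ : 0 ≤ X₀) {t : ℝ} (ht : t ≤ 0) :
    nhwOperator b σ μ β γ X₀ V₀ W V t = V₀ := by
  rw [nhwOperator, max_eq_right ht,
    skorokhodRegulator_of_nonpos (hX₀.trans (nhwNetInput_zero hW0).ge) ht]
  simp

/-- The net input moves by `μ ∫ (V₁ - V₂)` and the regulator by at most as much, whence the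
constant `γ + (β / μ) μ`. -/
theorem isVolterraLipschitz_nhwOperator (hμ : 0 < μ) (hβ : 0 ≤ β) (hγ : 0 ≤ γ)
    (hW : ContinuousOn W (Ici 0)) :
    IsVolterraLipschitz (nhwOperator b σ μ β γ X₀ V₀ W) (γ + β) := by
  intro V₁ V₂ B hV₁ hV₂ hB t ht hbd
  have hI : ∀ s ∈ Icc 0 t, |(∫ u in (0 : ℝ)..s, V₁ u) - ∫ u in (0 : ℝ)..s, V₂ u| ≤
      ∫ u in (0 : ℝ)..t, B u :=
    fun s hs => abs_intervalIntegral_sub_le_of_le hV₁ hV₂ hB hs.1 hs.2 hbd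
  have hZ : ∀ s ∈ Icc 0 t, |nhwNetInput b σ μ X₀ W V₁ s - nhwNetInput b σ μ X₀ W V₂ s| ≤
      μ * ∫ u in (0 : ℝ)..t, B u := by
    intro s hs
    have hdiff : nhwNetInput b σ μ X₀ W V₁ s - nhwNetInput b σ μ X₀ W V₂ s =
        μ * ((∫ u in (0 : ℝ)..s, V₁ u) - ∫ u in (0 : ℝ)..s, V₂ u) := by
      simp only [nhwNetInput, max_eq_left hs.1]
      rw [intervalIntegral.integral_add intervalIntegrable_const
          ((hV₁.intervalIntegrable _ _).const_mul μ),
        intervalIntegral.integral_add intervalIntegrable_const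
          ((hV₂.intervalIntegrable _ _).const_mul μ),
        intervalIntegral.integral_const_mul, intervalIntegral.integral_const_mul]
      ring
    rw [hdiff, abs_mul, abs_of_pos hμ]
    exact mul_le_mul_of_nonneg_left (hI s hs) hμ.le
  have hL := abs_skorokhodRegulator_sub_le (continuous_nhwNetInput hW hV₁)
    (continuous_nhwNetInput hW hV₂) ht hZ
  have hβμ : 0 ≤ β / μ := div_nonneg hβ hμ.le
  calc |nhwOperator b σ μ β γ X₀ V₀ W V₁ t - nhwOperator b σ μ β γ X₀ V₀ W V₂ t|
      = |-(γ * ((∫ u in (0 : ℝ)..t, V₁ u) - ∫ u in (0 : ℝ)..t, V₂ u)) +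
          β / μ * (skorokhodRegulator (nhwNetInput b σ μ X₀ W V₁) t -
            skorokhodRegulator (nhwNetInput b σ μ X₀ W V₂) t)| := by
        simp only [nhwOperator, max_eq_left ht]
        ring_nf
    _ ≤ γ * (∫ u in (0 : ℝ)..t, B u) + β / μ * (μ * ∫ u in (0 : ℝ)..t, B u) := by
        refine (abs_add_le _ _).trans (add_le_add ?_ ?_)
        · rw [abs_neg, abs_mul, abs_of_nonneg hγ]
          exact mul_le_mul_of_nonneg_left (hI t ⟨ht, le_rfl⟩) hγ
        · rw [abs_mul, abs_of_nonneg hβμ]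
          exact mul_le_mul_of_nonneg_left hL hβμ
    _ = (γ + β) * ∫ u in (0 : ℝ)..t, B u := by
        field_simp

end NearHalfinWhitt

theorem near_hw_limit_existence_general
    (b σ μ β γ : ℝ) (hμ : 0 < μ) (hβ : 0 < β) (hγ : 0 < γ)
    (W : ℝ → ℝ) (hW : ContinuousOn W (Set.Ici 0)) (hW0 : W 0 = 0)
    (X₀ V₀ : ℝ) (hX₀ : 0 ≤ X₀) :
    ∃ X V L : ℝ → ℝ,
      ContinuousOn X (Set.Ici 0) ∧ ContinuousOn V (Set.Ici 0) ∧
      ContinuousOn L (Set.Ici 0) ∧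
      (∀ t : ℝ, 0 ≤ t → 0 ≤ X t) ∧
      IsBoundaryTerm X L ∧
      (∀ t : ℝ, 0 ≤ t →
        X t = X₀ + (∫ s in (0:ℝ)..t, (b + μ * V s)) + σ * W t + L t) ∧
      (∀ t : ℝ, 0 ≤ t →
        V t = V₀ - γ * (∫ s in (0:ℝ)..t, V s) + (β / μ) * L t) := by
  obtain ⟨V, hV, hfix⟩ := (isVolterraLipschitz_nhwOperator (b := b) (σ := σ) (X₀ := X₀)
    (V₀ := V₀) hμ hβ.le hγ.le hW).exists_continuous_fixedPoint (by positivity)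
    (fun _ => continuous_nhwOperator hW hW0 hX₀) (fun _ _ => nhwOperator_of_nonpos hW0 hX₀)
  set Z := nhwNetInput b σ μ X₀ W V
  have hZ : Continuous Z := continuous_nhwNetInput hW hV
  have hZ0 : 0 ≤ Z 0 := hX₀.trans (nhwNetInput_zero hW0).ge
  have hL := continuous_skorokhodRegulator hZ hZ0
  refine ⟨Z + skorokhodRegulator Z, V, skorokhodRegulator Z, (hZ.add hL).continuousOn,
    hV.continuousOn, hL.continuousOn, fun t ht => add_skorokhodRegulator_nonneg hZ ht,
    isBoundaryTerm_skorokhodRegulator hZ hZ0, fun t ht => ?_, fun t ht => ?_⟩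
  · simp only [Pi.add_apply, Z, nhwNetInput, max_eq_left ht]
  · conv_lhs => rw [← hfix]
    simp only [nhwOperator, max_eq_left ht, Z]

/-- Existence of a solution for the near-Halfin–Whitt limit system with server
vacations: there exists a triple `(X, V, L)` of continuous functions with
`X ≥ 0` on `[0,∞)` and `L` a boundary term for `X` at zero, such that
`X(t) = X₀ + ∫₀ᵗ [b + μV(s)] ds + σW(t) + L(t)` and
`V(t) = V₀ − γ∫₀ᵗ V(s) ds + (β/μ)L(t)` for all `t ≥ 0`. -/
theorem near_hw_limit_existence
    (b σ μ β γ : ℝ) (hμ : 0 < μ) (hβ : 0 < β) (hγ : 0 < γ)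
    (W : ℝ → ℝ) (hW : ContinuousOn W (Set.Ici 0)) (hW0 : W 0 = 0)
    (X₀ V₀ : ℝ) (hX₀ : 0 ≤ X₀) (hV₀ : 0 ≤ V₀) :
    ∃ X V L : ℝ → ℝ,
      ContinuousOn X (Set.Ici 0) ∧ ContinuousOn V (Set.Ici 0) ∧
      ContinuousOn L (Set.Ici 0) ∧
      (∀ t : ℝ, 0 ≤ t → 0 ≤ X t) ∧
      IsBoundaryTerm X L ∧
      (∀ t : ℝ, 0 ≤ t →
        X t = X₀ + (∫ s in (0:ℝ)..t, (b + μ * V s)) + σ * W t + L t) ∧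
      (∀ t : ℝ, 0 ≤ t →
        V t = V₀ - γ * (∫ s in (0:ℝ)..t, V s) + (β / μ) * L t) :=
  near_hw_limit_existence_general b σ μ β γ hμ hβ hγ W hW hW0 X₀ V₀ hX₀
end

section
/- Fix constants γ > 0, c ≥ 0, and V₀ ≥ 0, and let L : [0,∞) → [0,∞) be a nondecreasing continuous function with L(0) = 0. If V : [0,∞) → ℝ is continuous and satisfies V(t) = V₀ − γ∫₀ᵗ V(s) ds + c·L(t) for all t ≥ 0, then V(t) ≥ 0 for all t ≥ 0. -/
/-- Nonnegativity of the vacation-population component of the near-Halfin–Whitt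
limit system: if `V` is continuous and satisfies
`V(t) = V₀ − γ∫₀ᵗ V(s) ds + c·L(t)` where `V₀ ≥ 0`, `c ≥ 0`, and `L` is a
nondecreasing continuous nonnegative function with `L(0) = 0`, then `V(t) ≥ 0`
for all `t ≥ 0`. -/
theorem near_hw_vacation_eq_nonneg
    (γ c V₀ : ℝ) (hγ : 0 < γ) (hc : 0 ≤ c) (hV₀ : 0 ≤ V₀)
    (L : ℝ → ℝ) (hL : ContinuousOn L (Set.Ici 0))
    (hLnn : ∀ t : ℝ, 0 ≤ t → 0 ≤ L t)
    (hLmono : MonotoneOn L (Set.Ici 0)) (hL0 : L 0 = 0)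
    (V : ℝ → ℝ) (hV : ContinuousOn V (Set.Ici 0))
    (heqV : ∀ t : ℝ, 0 ≤ t →
      V t = V₀ - γ * (∫ s in (0:ℝ)..t, V s) + c * L t) :
    ∀ t : ℝ, 0 ≤ t → 0 ≤ V t := by
  intro t₀ ht₀
  by_contra hneg
  push_neg at hneg
  -- V 0 = V₀ ≥ 0
  have hV0 : V 0 = V₀ := by
    have := heqV 0 le_rfl
    simpa [hL0] using this
  -- the set of points in [0, t₀] where V is nonnegative
  set S : Set ℝ := Set.Icc 0 t₀ ∩ V ⁻¹' Set.Ici 0 with hS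
  have hSne : S.Nonempty := ⟨0, ⟨⟨le_rfl, ht₀⟩, by simp [hV0, hV₀]⟩⟩
  have hSbdd : BddAbove S := ⟨t₀, fun x hx => hx.1.2⟩
  have hSclosed : IsClosed S := by
    apply ContinuousOn.preimage_isClosed_of_isClosed
      (hV.mono (fun x hx => hx.1)) isClosed_Icc isClosed_Ici
  set τ := sSup S with hτ
  have hτS : τ ∈ S := hSclosed.csSup_mem hSne hSbdd
  have hτ0 : 0 ≤ τ := hτS.1.1
  have hτt₀ : τ ≤ t₀ := hτS.1.2
  have hVτ : 0 ≤ V τ := hτS.2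
  have hτlt : τ < t₀ := lt_of_le_of_ne hτt₀ (by
    intro h; rw [h] at hVτ; exact absurd hVτ (not_le.mpr hneg))
  -- V is negative strictly between τ and t₀
  have hVneg : ∀ x, τ < x → x ≤ t₀ → V x < 0 := by
    intro x hx hx'
    by_contra h
    push_neg at h
    have : x ∈ S := ⟨⟨le_trans hτ0 hx.le, hx'⟩, h⟩
    exact absurd (le_csSup hSbdd this) (not_le.mpr hx)
  -- V τ ≤ 0 by right continuity
  have hVτle : V τ ≤ 0 := by
    have hcw : ContinuousWithinAt V (Set.Ioc τ t₀) τ :=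
      (hV τ (Set.mem_Ici.mpr hτ0)).mono (fun y hy =>
        Set.mem_Ici.mpr (le_trans hτ0 hy.1.le))
    have hne : (nhdsWithin τ (Set.Ioc τ t₀)).NeBot := by
      rw [nhdsWithin_Ioc_eq_nhdsGT hτlt]
      exact nhdsGT_neBot τ
    refine le_of_tendsto hcw ?_
    filter_upwards [self_mem_nhdsWithin] with y hy
    exact (hVneg y hy.1 hy.2).le
  -- V x ≤ 0 on [τ, t₀]
  have hVle : ∀ x ∈ Set.Icc τ t₀, V x ≤ 0 := by
    intro x hx
    rcases eq_or_lt_of_le hx.1 with heq | h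
    · rw [← heq]; exact hVτle
    · exact (hVneg x h hx.2).le
  -- integrability
  have hint : ∀ a b : ℝ, 0 ≤ a → 0 ≤ b → IntervalIntegrable V MeasureTheory.volume a b := by
    intro a b ha hb
    apply ContinuousOn.intervalIntegrable
    refine hV.mono (fun x hx => Set.mem_Ici.mpr ?_)
    rcases Set.mem_uIcc.mp hx with ⟨h1, _⟩ | ⟨h1, _⟩
    exacts [le_trans ha h1, le_trans hb h1]
  -- integral over [τ, t₀] is nonpositive
  have hI : (∫ s in τ..t₀, V s) ≤ 0 := by
    rw [intervalIntegral.integral_of_le hτlt.le]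
    apply MeasureTheory.setIntegral_nonpos measurableSet_Ioc
    intro x hx
    exact hVle x ⟨hx.1.le, hx.2⟩
  -- splitting the integral
  have hsplit : (∫ s in (0:ℝ)..t₀, V s) = (∫ s in (0:ℝ)..τ, V s) + ∫ s in τ..t₀, V s :=
    (intervalIntegral.integral_add_adjacent_intervals (hint 0 τ le_rfl hτ0)
      (hint τ t₀ hτ0 ht₀)).symm
  have heq1 := heqV τ hτ0
  have heq2 := heqV t₀ ht₀
  have hLle : L τ ≤ L t₀ := hLmono hτ0 ht₀ hτt₀
  have : V t₀ = V τ - γ * (∫ s in τ..t₀, V s) + c * (L t₀ - L τ) := by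
    rw [heq1, heq2, hsplit]; ring
  have : 0 ≤ V t₀ := by
    rw [this]
    have h1 : 0 ≤ -(γ * (∫ s in τ..t₀, V s)) := by
      rw [neg_nonneg]
      exact mul_nonpos_of_nonneg_of_nonpos hγ.le hI
    have h2 : 0 ≤ c * (L t₀ - L τ) := mul_nonneg hc (by linarith)
    linarith
  exact absurd this (not_le.mpr hneg)
end

section
/- Fix constants b ∈ ℝ, σ ∈ ℝ, μ > 0, β > 0, γ > 0, a continuous function W : [0,∞) → ℝ with W(0) = 0, nondecreasing right-continuous functions N_B, N_E : [0,∞) → ℕ with N_B(0) = N_E(0) = 0 all of whose jumps have size 1, and initial values X₀ ≥ 0, V₀ ∈ ℕ. Suppose (X, V, L) and (X', V', L') are two triples where X, X' : [0,∞) → [0,∞) are continuous, L is a boundary term for X at zero, L' is a boundary term for X' at zero, V, V' : [0,∞) → ℕ, and for all t ≥ 0: X(t) = X₀ + ∫₀ᵗ [b + μV(s)] ds + σW(t) + L(t) and V(t) = V₀ − N_E(γ∫₀ᵗ V(s) ds) + N_B((β/μ)L(t)) (and likewise for the primed triple). Then X = X', V = V', and L = L'; i.e., pathwise uniqueness holds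 for the nondegenerate-slowdown limit system. -/
open MeasureTheory

/-- A counting path: a nondecreasing, right-continuous, `ℕ`-valued function on
`[0,∞)` starting at `0`, all of whose jumps have size `1`. -/
def IsCountingPath (N : ℝ → ℕ) : Prop :=
  N 0 = 0 ∧ MonotoneOn N (Set.Ici 0) ∧
  (∀ t : ℝ, 0 ≤ t → ∃ ε > (0:ℝ), ∀ u ∈ Set.Ico t (t + ε), N u = N t) ∧
  (∀ t : ℝ, 0 < t → ∃ ε > (0:ℝ), ∀ u ∈ Set.Ioo (t - ε) t, N t ≤ N u + 1)

open Set Filter Topology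

/-!
Continuous induction on the first time `T` at which `V` and `V'` differ. Before `T` both solutions
have the same drift, so `X - L = X' - L'` on `[0, T]`, and the Skorokhod comparison argument (a
boundary term is flat while its process is positive) forces `X = X'` and `L = L'` there. Then the
arguments of `N_E` and `N_B` agree at `T`, so `V T = V' T`; since these arguments are continuous
and nondecreasing while `N_E`, `N_B` are right-continuous step functions, `V` and `V'` stay
constant on a right neighbourhood of `T`.

`V` is not assumed measurable. Its local integrability is proved by the same induction: `V` is
bounded by the nondecreasing envelope `V₀ + N_B(ℓ t)`, and coincides with it wherever the integral
would take the junk value `0`.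
-/

theorem Real.forall_ge_of_eventually_nhdsGE {P : ℝ → Prop} {a : ℝ}
    (h : ∀ T, a ≤ T → (∀ s ∈ Ico a T, P s) → ∀ᶠ t in 𝓝[≥] T, P t) :
    ∀ t, a ≤ t → P t := by
  by_contra! hbad
  set E := {t | a ≤ t ∧ ¬P t}
  have hE : E.Nonempty := hbad
  have hEbdd : BddBelow E := ⟨a, fun _ ht => ht.1⟩
  have haT : a ≤ sInf E := le_csInf hE fun _ ht => ht.1
  have hbelow : ∀ s ∈ Ico a (sInf E), P s := fun s hs =>
    by_contra fun hPs => (csInf_le hEbdd ⟨hs.1, hPs⟩).not_gt hs.2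
  obtain ⟨u, hu, hIco⟩ := mem_nhdsGE_iff_exists_Ico_subset.1 (h _ haT hbelow)
  obtain ⟨e, he, heu⟩ := exists_lt_of_csInf_lt hE hu
  exact he.2 (hIco ⟨csInf_le hEbdd he, heu⟩)

section Integrability

variable {E : Type*} [NormedAddCommGroup E]

theorem intervalIntegrable_of_forall_lt {f : ℝ → E} {a b C : ℝ} (hab : a ≤ b)
    (hbound : ∀ x ∈ Ioc a b, ‖f x‖ ≤ C)
    (hint : ∀ t ∈ Ioo a b, IntervalIntegrable f volume a t) :
    IntervalIntegrable f volume a b := by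
  rcases hab.eq_or_lt with rfl | hab
  · exact .refl
  obtain ⟨u, -, hu, hlim⟩ := exists_seq_strictMono_tendsto' hab
  have hcover : Ioo a b = ⋃ n, Ioc a (u n) := by
    refine Subset.antisymm (fun x hx => ?_)
      (iUnion_subset fun n x hx => ⟨hx.1, hx.2.trans_lt (hu n).2⟩)
    obtain ⟨n, hn⟩ := (hlim.eventually (lt_mem_nhds hx.2)).exists
    exact mem_iUnion.2 ⟨n, hx.1, hn.le⟩
  have hmeas : AEStronglyMeasurable f (volume.restrict (Ioc a b)) := by
    rw [← Measure.restrict_congr_set Ioo_ae_eq_Ioc, hcover, aestronglyMeasurable_iUnion_iff]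
    intro n
    exact ((intervalIntegrable_iff_integrableOn_Ioc_of_le (hu n).1.le).1 (hint _ (hu n))).1
  rw [intervalIntegrable_iff_integrableOn_Ioc_of_le hab.le]
  exact Integrable.mono' (integrableOn_const measure_Ioc_lt_top.ne) hmeas
    ((ae_restrict_iff' measurableSet_Ioc).2 (.of_forall hbound))

variable [NormedSpace ℝ E]

theorem continuousOn_primitive_Ici {f : ℝ → E} {a : ℝ}
    (h : ∀ t, a ≤ t → IntervalIntegrable f volume a t) :
    ContinuousOn (fun t => ∫ x in a..t, f x) (Ici a) := by
  intro t ht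
  have hat : a ≤ t + 1 := by linarith [mem_Ici.1 ht]
  have hIcc : ContinuousWithinAt (fun t => ∫ x in a..t, f x) (Icc a (t + 1)) t :=
    intervalIntegral.continuousWithinAt_primitive (measure_singleton t)
      (by rw [min_self, max_eq_right hat]; exact h _ hat)
  exact hIcc.mono_of_mem_nhdsWithin (inter_mem_nhdsWithin _ (Iic_mem_nhds (lt_add_one t)))

theorem intervalIntegral.integral_congr_Ico {f g : ℝ → E} {a b : ℝ} (hab : a ≤ b)
    (h : EqOn f g (Ico a b)) : ∫ x in a..b, f x = ∫ x in a..b, g x := by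
  refine intervalIntegral.integral_congr_ae ?_
  filter_upwards [Measure.ae_ne volume b] with x hxb hx
  rw [uIoc_of_le hab] at hx
  exact h ⟨hx.1.le, lt_of_le_of_ne hx.2 hxb⟩

end Integrability

theorem IsCountingPath.eventually_eq_of_tendsto {N : ℝ → ℕ} (hN : IsCountingPath N)
    {α : Type*} {l : Filter α} {g : α → ℝ} {x : ℝ} (hx : 0 ≤ x) (hg : Tendsto g l (𝓝[≥] x)) :
    ∀ᶠ y in l, N (g y) = N x := by
  obtain ⟨ε, hε, hconst⟩ := hN.2.2.1 x hx
  exact (hg.eventually (Ico_mem_nhdsGE (lt_add_of_pos_right x hε))).mono fun y hy => hconst _ hy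

theorem IsBoundaryTerm.eq_of_forall_pos {X L : ℝ → ℝ} (hL : IsBoundaryTerm X L) {u t : ℝ}
    (hu : 0 ≤ u) (hut : u ≤ t) (hpos : ∀ s ∈ Ioc u t, 0 < X s) : L t = L u := by
  obtain ⟨-, -, -, S, hSL, -, hSnull⟩ := hL
  have hnull : S.measure (Ioc u t) = 0 :=
    measure_mono_null (fun s hs => show 0 ≤ s ∧ 0 < X s from ⟨hu.trans hs.1.le, hpos s hs⟩) hSnull
  rw [StieltjesFunction.measure_Ioc, ENNReal.ofReal_eq_zero, sub_nonpos] at hnull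
  rw [← hSL t (hu.trans hut), ← hSL u hu]
  exact le_antisymm hnull (S.mono hut)

theorem IsBoundaryTerm.le_of_sub_eq {X L X' L' : ℝ → ℝ} (hL : IsBoundaryTerm X L)
    (hX : ContinuousOn X (Ici 0)) (hX' : ContinuousOn X' (Ici 0))
    (hX'nn : ∀ t, 0 ≤ t → 0 ≤ X' t) (hL'0 : L' 0 = 0) (hL' : MonotoneOn L' (Ici 0))
    {t : ℝ} (ht : 0 ≤ t) (heq : ∀ s ∈ Icc 0 t, X s - L s = X' s - L' s) : X t ≤ X' t := by
  by_contra! hlt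
  set D := Icc 0 t ∩ (X - X') ⁻¹' Iic 0
  have hDcpt : IsCompact D :=
    isCompact_Icc.of_isClosed_subset (((hX.mono Icc_subset_Ici_self).sub
      (hX'.mono Icc_subset_Ici_self)).preimage_isClosed_of_isClosed isClosed_Icc isClosed_Iic)
      inter_subset_left
  have h0 : (0 : ℝ) ∈ D := by
    have := heq 0 ⟨le_rfl, ht⟩
    simp only [hL.1, hL'0, sub_zero] at this
    exact ⟨⟨le_rfl, ht⟩, by simp [this]⟩
  -- `u` is the last time before `t` with `X ≤ X'`. On `(u, t]`, `X > X' ≥ 0`, so `L` is flat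
  -- there while `L'` can only grow, whence `X t - X' t ≤ X u - X' u ≤ 0`.
  set u := sSup D
  have hu : u ∈ D := hDcpt.sSup_mem ⟨0, h0⟩
  have hut : u < t := hu.1.2.lt_of_ne fun hut => by
    have := hu.2; simp only [hut, mem_preimage, Pi.sub_apply, mem_Iic] at this; linarith
  have hpos : ∀ s ∈ Ioc u t, 0 < X s := fun s hs => by
    by_contra! hXs
    have hsD : s ∈ D := ⟨⟨hu.1.1.trans hs.1.le, hs.2⟩,
      by simp only [mem_preimage, Pi.sub_apply, mem_Iic]; linarith [hX'nn s (hu.1.1.trans hs.1.le)]⟩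
    exact (le_csSup hDcpt.bddAbove hsD).not_gt hs.1
  have hLu := hL.eq_of_forall_pos hu.1.1 hut.le hpos
  have hL'u := hL' hu.1.1 (hu.1.1.trans hut.le) hut.le
  have hDu : X u - X' u ≤ 0 := hu.2
  linarith [heq u hu.1, heq t ⟨ht, le_rfl⟩]

theorem IsBoundaryTerm.eq_of_sub_eq {X L X' L' : ℝ → ℝ} (hL : IsBoundaryTerm X L)
    (hL' : IsBoundaryTerm X' L') (hX : ContinuousOn X (Ici 0)) (hX' : ContinuousOn X' (Ici 0))
    (hXnn : ∀ t, 0 ≤ t → 0 ≤ X t) (hX'nn : ∀ t, 0 ≤ t → 0 ≤ X' t)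
    {t : ℝ} (ht : 0 ≤ t) (heq : ∀ s ∈ Icc 0 t, X s - L s = X' s - L' s) :
    X t = X' t ∧ L t = L' t := by
  have hle := hL.le_of_sub_eq hX hX' hX'nn hL'.1 hL'.2.2.1 ht heq
  have hge := hL'.le_of_sub_eq hX' hX hXnn hL.1 hL.2.2.1 ht fun s hs => (heq s hs).symm
  have := heq t ⟨ht, le_rfl⟩
  exact ⟨le_antisymm hle hge, by linarith⟩

def SolvesCountingEquation (V₀ : ℕ) (γ : ℝ) (NE NB : ℝ → ℕ) (ℓ : ℝ → ℝ) (V : ℝ → ℕ) : Prop :=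
  ∀ t : ℝ, 0 ≤ t →
    (V t : ℤ) = (V₀ : ℤ) - (NE (γ * ∫ s in (0:ℝ)..t, (V s : ℝ)) : ℤ) + (NB (ℓ t) : ℤ)

namespace SolvesCountingEquation

variable {V₀ : ℕ} {γ : ℝ} {NE NB : ℝ → ℕ} {ℓ : ℝ → ℝ} {V : ℝ → ℕ}

theorem le_envelope (h : SolvesCountingEquation V₀ γ NE NB ℓ V) {t : ℝ} (ht : 0 ≤ t) :
    V t ≤ V₀ + NB (ℓ t) := by
  have := h t ht
  omega

theorem intervalIntegrable (h : SolvesCountingEquation V₀ γ NE NB ℓ V) (hNE0 : NE 0 = 0)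
    (hNB : MonotoneOn NB (Ici 0)) (hℓ : MonotoneOn ℓ (Ici 0)) (hℓ0 : MapsTo ℓ (Ici 0) (Ici 0)) :
    ∀ t, 0 ≤ t → IntervalIntegrable (fun s => (V s : ℝ)) volume 0 t := by
  have hU : MonotoneOn (fun t => V₀ + NB (ℓ t)) (Ici 0) := fun x hx y hy hxy =>
    Nat.add_le_add_left (hNB.comp hℓ hℓ0 hx hy hxy) _
  refine Real.forall_ge_of_eventually_nhdsGE fun T hT hbelow => ?_
  have hT_int : IntervalIntegrable (fun s => (V s : ℝ)) volume 0 T :=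
    intervalIntegrable_of_forall_lt hT (C := V₀ + NB (ℓ T))
      (fun x hx => by
        rw [Real.norm_natCast]
        exact_mod_cast (h.le_envelope hx.1.le).trans (hU hx.1.le hT hx.2))
      fun t ht => hbelow t ⟨ht.1.le, ht.2⟩
  by_cases hright : ∃ t₁ ∈ Ioc T (T + 1), IntervalIntegrable (fun s => (V s : ℝ)) volume 0 t₁
  · obtain ⟨t₁, ht₁, hint⟩ := hright
    filter_upwards [Ico_mem_nhdsGE ht₁.1] with t ht
    refine hint.mono_set ?_
    rw [uIcc_of_le (hT.trans ht.1), uIcc_of_le (hT.trans ht₁.1.le)]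
    exact Icc_subset_Icc_right ht.2.le
  -- Otherwise the integrals past `T` take the junk value `0`, so there `V` equals its
  -- nondecreasing envelope, and a monotone function is integrable.
  push Not at hright
  have hjunk : ∀ t ∈ Ioc T (T + 1), V t = V₀ + NB (ℓ t) := fun t ht => by
    have := h t (hT.trans ht.1.le)
    rw [intervalIntegral.integral_undef (hright t ht), mul_zero, hNE0] at this
    omega
  have hmono : MonotoneOn (fun s => (V s : ℝ)) (uIcc T (T + 1)) := by
    rw [uIcc_of_le (by linarith)]
    intro x hx y hy hxy
    rcases hy.1.eq_or_lt with rfl | hTy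
    · rw [le_antisymm hxy hx.1]
    · have : V x ≤ V₀ + NB (ℓ y) :=
        (h.le_envelope (hT.trans hx.1)).trans (hU (hT.trans hx.1) (hT.trans hTy.le) hxy)
      rw [← hjunk y ⟨hTy, hy.2⟩] at this
      exact Nat.cast_le.2 this
  exact absurd (hT_int.trans hmono.intervalIntegrable) (hright _ ⟨by linarith, le_rfl⟩)

theorem eventually_eq_nhdsGE (h : SolvesCountingEquation V₀ γ NE NB ℓ V) (hγ : 0 ≤ γ)
    (hNE : IsCountingPath NE) (hNB : IsCountingPath NB) (hℓ : MonotoneOn ℓ (Ici 0))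
    (hℓ0 : MapsTo ℓ (Ici 0) (Ici 0)) (hℓc : ContinuousOn ℓ (Ici 0))
    (hV : ∀ t, 0 ≤ t → IntervalIntegrable (fun s => (V s : ℝ)) volume 0 t) {T : ℝ}
    (hT : 0 ≤ T) : ∀ᶠ t in 𝓝[≥] T, V t = V T := by
  set G := fun t => γ * ∫ s in (0:ℝ)..t, (V s : ℝ)
  have hG : Tendsto G (𝓝[≥] T) (𝓝[≥] G T) :=
    ((continuousOn_const.mul (continuousOn_primitive_Ici hV)).mono (Ici_subset_Ici.2 hT) T
      (le_refl T)).tendsto_nhdsWithin fun t ht => mul_le_mul_of_nonneg_left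
        (intervalIntegral.integral_mono_interval le_rfl hT ht
          (.of_forall fun _ => Nat.cast_nonneg _) (hV t (hT.trans ht))) hγ
  have hℓT : Tendsto ℓ (𝓝[≥] T) (𝓝[≥] ℓ T) :=
    ((hℓc.mono (Ici_subset_Ici.2 hT)) T (le_refl T)).tendsto_nhdsWithin
      fun t ht => hℓ hT (hT.trans ht) ht
  have hGT : 0 ≤ G T :=
    mul_nonneg hγ (intervalIntegral.integral_nonneg hT fun _ _ => Nat.cast_nonneg _)
  filter_upwards [self_mem_nhdsWithin, hNE.eventually_eq_of_tendsto hGT hG,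
    hNB.eventually_eq_of_tendsto (hℓ0 hT) hℓT] with t ht hE hB
  have hVt := h t (hT.trans ht)
  have hVT := h T hT
  simp only [G] at hE
  rw [hE, hB, ← hVT] at hVt
  exact_mod_cast hVt

end SolvesCountingEquation

theorem continuousOn_of_eq_add_primitive {X L W f : ℝ → ℝ} {x₀ σ : ℝ}
    (hX : ContinuousOn X (Ici 0)) (hW : ContinuousOn W (Ici 0))
    (hf : ∀ t, 0 ≤ t → IntervalIntegrable f volume 0 t)
    (heq : ∀ t, 0 ≤ t → X t = x₀ + (∫ s in (0:ℝ)..t, f s) + σ * W t + L t) :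
    ContinuousOn L (Ici 0) := by
  have hrest : ContinuousOn (fun t => X t - (x₀ + (∫ s in (0:ℝ)..t, f s) + σ * W t)) (Ici 0) :=
    hX.sub ((continuousOn_const.add (continuousOn_primitive_Ici hf)).add
      (continuousOn_const.mul hW))
  exact hrest.congr fun t ht => by linarith [heq t ht]

theorem nds_count_eventually_eq_nhdsGE {b σ μ γ κ x₀ : ℝ} (hγ : 0 ≤ γ) (hκ : 0 ≤ κ)
    {W : ℝ → ℝ} (hW : ContinuousOn W (Ici 0)) {NB NE : ℝ → ℕ} (hNB : IsCountingPath NB)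
    (hNE : IsCountingPath NE) {V₀ : ℕ} {X L : ℝ → ℝ} {V : ℝ → ℕ}
    (hX : ContinuousOn X (Ici 0)) (hL : IsBoundaryTerm X L)
    (heqX : ∀ t, 0 ≤ t → X t = x₀ + (∫ s in (0:ℝ)..t, (b + μ * (V s : ℝ))) + σ * W t + L t)
    (heqV : SolvesCountingEquation V₀ γ NE NB (fun t => κ * L t) V) :
    ∀ T, 0 ≤ T → ∀ᶠ t in 𝓝[≥] T, V t = V T := by
  obtain ⟨-, hL0, hLmono, -⟩ := hL
  have hℓ : MonotoneOn (fun t => κ * L t) (Ici 0) := fun x hx y hy hxy =>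
    mul_le_mul_of_nonneg_left (hLmono hx hy hxy) hκ
  have hℓ0 : MapsTo (fun t => κ * L t) (Ici 0) (Ici 0) := fun t ht => mul_nonneg hκ (hL0 t ht)
  have hV := heqV.intervalIntegrable hNE.1 hNB.2.1 hℓ hℓ0
  have hLc := continuousOn_of_eq_add_primitive hX hW
    (fun t ht => intervalIntegrable_const.add ((hV t ht).const_mul μ)) heqX
  exact fun T => heqV.eventually_eq_nhdsGE hγ hNE hNB hℓ hℓ0 (continuousOn_const.mul hLc) hV

theorem nds_limit_pathwise_uniqueness_general
    (b σ μ β γ : ℝ) (hμ : 0 < μ) (hβ : 0 < β) (hγ : 0 < γ)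
    (W : ℝ → ℝ) (hW : ContinuousOn W (Set.Ici 0))
    (NB NE : ℝ → ℕ) (hNB : IsCountingPath NB) (hNE : IsCountingPath NE)
    (X₀ : ℝ) (V₀ : ℕ)
    (X L X' L' : ℝ → ℝ) (V V' : ℝ → ℕ)
    (hX : ContinuousOn X (Set.Ici 0)) (hX' : ContinuousOn X' (Set.Ici 0))
    (hXnn : ∀ t : ℝ, 0 ≤ t → 0 ≤ X t) (hXnn' : ∀ t : ℝ, 0 ≤ t → 0 ≤ X' t)
    (hbdry : IsBoundaryTerm X L) (hbdry' : IsBoundaryTerm X' L')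
    (heqX : ∀ t : ℝ, 0 ≤ t →
      X t = X₀ + (∫ s in (0:ℝ)..t, (b + μ * (V s : ℝ))) + σ * W t + L t)
    (heqV : ∀ t : ℝ, 0 ≤ t →
      (V t : ℤ) = (V₀ : ℤ) - (NE (γ * ∫ s in (0:ℝ)..t, (V s : ℝ)) : ℤ)
        + (NB ((β / μ) * L t) : ℤ))
    (heqX' : ∀ t : ℝ, 0 ≤ t →
      X' t = X₀ + (∫ s in (0:ℝ)..t, (b + μ * (V' s : ℝ))) + σ * W t + L' t)
    (heqV' : ∀ t : ℝ, 0 ≤ t →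
      (V' t : ℤ) = (V₀ : ℤ) - (NE (γ * ∫ s in (0:ℝ)..t, (V' s : ℝ)) : ℤ)
        + (NB ((β / μ) * L' t) : ℤ)) :
    ∀ t : ℝ, 0 ≤ t → X t = X' t ∧ V t = V' t ∧ L t = L' t := by
  have hκ : 0 ≤ β / μ := (div_pos hβ hμ).le
  have hloc := nds_count_eventually_eq_nhdsGE hγ.le hκ hW hNB hNE hX hbdry heqX heqV
  have hloc' := nds_count_eventually_eq_nhdsGE hγ.le hκ hW hNB hNE hX' hbdry' heqX' heqV'
  have hXL : ∀ t, EqOn V V' (Ico 0 t) → ∀ s ∈ Icc 0 t, X s - L s = X' s - L' s := by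
    intro t hVV s hs
    have := intervalIntegral.integral_congr_Ico hs.1 fun u hu =>
      show b + μ * (V u : ℝ) = b + μ * (V' u : ℝ) by rw [hVV ⟨hu.1, hu.2.trans_le hs.2⟩]
    linarith [heqX s hs.1, heqX' s hs.1]
  have hVV : ∀ t, 0 ≤ t → V t = V' t := Real.forall_ge_of_eventually_nhdsGE fun T hT hbelow => by
    have hLT := (hbdry.eq_of_sub_eq hbdry' hX hX' hXnn hXnn' hT (hXL T hbelow)).2
    have hGT := intervalIntegral.integral_congr_Ico hT fun s hs =>
      congrArg (Nat.cast : ℕ → ℝ) (hbelow s hs)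
    have hVT : V T = V' T := by
      have h := heqV T hT
      have h' := heqV' T hT
      rw [hGT, hLT] at h
      omega
    filter_upwards [hloc T hT, hloc' T hT] with t ht ht'
    rw [ht, ht', hVT]
  intro t ht
  obtain ⟨hXt, hLt⟩ :=
    hbdry.eq_of_sub_eq hbdry' hX hX' hXnn hXnn' ht (hXL t fun s hs => hVV s hs.1)
  exact ⟨hXt, hVV t ht, hLt⟩

/-- Pathwise uniqueness for the nondegenerate-slowdown limit system with server
vacations: two solutions `(X, V, L)` and `(X', V', L')` of
`X(t) = X₀ + ∫₀ᵗ [b + μV(s)] ds + σW(t) + L(t)`,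
`V(t) = V₀ − N_E(γ∫₀ᵗ V(s) ds) + N_B((β/μ)L(t))`,
with `X, X'` continuous nonnegative, `L, L'` boundary terms at zero and `V, V'`
`ℕ`-valued, coincide. -/
theorem nds_limit_pathwise_uniqueness
    (b σ μ β γ : ℝ) (hμ : 0 < μ) (hβ : 0 < β) (hγ : 0 < γ)
    (W : ℝ → ℝ) (hW : ContinuousOn W (Set.Ici 0)) (hW0 : W 0 = 0)
    (NB NE : ℝ → ℕ) (hNB : IsCountingPath NB) (hNE : IsCountingPath NE)
    (X₀ : ℝ) (hX₀ : 0 ≤ X₀) (V₀ : ℕ)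
    (X L X' L' : ℝ → ℝ) (V V' : ℝ → ℕ)
    (hX : ContinuousOn X (Set.Ici 0)) (hX' : ContinuousOn X' (Set.Ici 0))
    (hXnn : ∀ t : ℝ, 0 ≤ t → 0 ≤ X t) (hXnn' : ∀ t : ℝ, 0 ≤ t → 0 ≤ X' t)
    (hbdry : IsBoundaryTerm X L) (hbdry' : IsBoundaryTerm X' L')
    (heqX : ∀ t : ℝ, 0 ≤ t →
      X t = X₀ + (∫ s in (0:ℝ)..t, (b + μ * (V s : ℝ))) + σ * W t + L t)
    (heqV : ∀ t : ℝ, 0 ≤ t →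
      (V t : ℤ) = (V₀ : ℤ) - (NE (γ * ∫ s in (0:ℝ)..t, (V s : ℝ)) : ℤ)
        + (NB ((β / μ) * L t) : ℤ))
    (heqX' : ∀ t : ℝ, 0 ≤ t →
      X' t = X₀ + (∫ s in (0:ℝ)..t, (b + μ * (V' s : ℝ))) + σ * W t + L' t)
    (heqV' : ∀ t : ℝ, 0 ≤ t →
      (V' t : ℤ) = (V₀ : ℤ) - (NE (γ * ∫ s in (0:ℝ)..t, (V' s : ℝ)) : ℤ)
        + (NB ((β / μ) * L' t) : ℤ)) :
    ∀ t : ℝ, 0 ≤ t → X t = X' t ∧ V t = V' t ∧ L t = L' t :=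
  nds_limit_pathwise_uniqueness_general b σ μ β γ hμ hβ hγ W hW NB NE hNB hNE X₀ V₀ X L X' L' V V'
    hX hX' hXnn hXnn' hbdry hbdry' heqX heqV heqX' heqV'
end

section
/- Fix m ≥ 1, constants b ∈ ℝ, σ ∈ ℝ, μ > 0, vectors β, γ ∈ [0,∞)^m, an m×m transition rate matrix R, a continuous function W : [0,∞) → ℝ with W(0) = 0, and initial values X₀ ∈ ℝ, U₀ ∈ [0,∞)^m. Let G = diag(γ). Suppose (X, U) and (X', U') are two pairs of continuous functions, X, X' : [0,∞) → ℝ and U, U' : [0,∞) → ℝ^m, satisfying for all t ≥ 0: X(t) = X₀ + ∫₀ᵗ [b + μ·max(−X(s), V(s))] ds + σW(t) and U(t) = U₀ + ∫₀ᵗ [β·max(−(X(s)+V(s)), 0) + (R − G)U(s)] ds, where V(s) = U₁(s) + ⋯ + U_m(s) (and likewise for the primed pair with V' = U'·1). Then X = X' and U = U'; i.e., pathwise uniqueness holds for the multi-stage Halfin–Whitt limit system. -/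
open Finset Matrix

set_option maxHeartbeats 2000000

/-- An `m × m` real matrix `R = (r_ij)` is a transition rate matrix if
`r_ij ≥ 0` for all `i ≠ j` and `r_ii = −Σ_{j≠i} r_ij` for each `i`. -/
def IsTransitionRateMatrix {m : ℕ} (R : Matrix (Fin m) (Fin m) ℝ) : Prop :=
  (∀ i j, i ≠ j → 0 ≤ R i j) ∧ ∀ i, R i i = -∑ j ∈ Finset.univ.erase i, R i j

/-- Pathwise uniqueness for the multi-stage Halfin–Whitt limit system with `m`
vacation stages: two continuous solutions `(X, U)` and `(X', U')` of
`X(t) = X₀ + ∫₀ᵗ [b + μ·max(−X(s), V(s))] ds + σW(t)`,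
`U(t) = U₀ + ∫₀ᵗ [β·max(−(X(s)+V(s)), 0) + (R − G)U(s)] ds`,
where `V = Σᵢ Uᵢ` and `G = diag(γ)`, coincide. -/
theorem multistage_hw_pathwise_uniqueness
    (m : ℕ) (hm : 1 ≤ m)
    (b σ μ : ℝ) (hμ : 0 < μ)
    (β γ : Fin m → ℝ) (hβ : ∀ i, 0 ≤ β i) (hγ : ∀ i, 0 ≤ γ i)
    (R : Matrix (Fin m) (Fin m) ℝ) (hR : IsTransitionRateMatrix R)
    (W : ℝ → ℝ) (hW : ContinuousOn W (Set.Ici 0)) (hW0 : W 0 = 0)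
    (X₀ : ℝ) (U₀ : Fin m → ℝ) (hU₀ : ∀ i, 0 ≤ U₀ i)
    (X X' : ℝ → ℝ) (U U' : ℝ → Fin m → ℝ)
    (hX : ContinuousOn X (Set.Ici 0)) (hX' : ContinuousOn X' (Set.Ici 0))
    (hU : ∀ i, ContinuousOn (fun t => U t i) (Set.Ici 0))
    (hU' : ∀ i, ContinuousOn (fun t => U' t i) (Set.Ici 0))
    (heqX : ∀ t : ℝ, 0 ≤ t →
      X t = X₀ + (∫ s in (0:ℝ)..t, (b + μ * max (-(X s)) (∑ i, U s i))) + σ * W t)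
    (heqU : ∀ t : ℝ, 0 ≤ t → ∀ i, U t i = U₀ i +
      ∫ s in (0:ℝ)..t,
        (β i * max (-(X s + ∑ j, U s j)) 0 +
          ((R - Matrix.diagonal γ) *ᵥ (U s)) i))
    (heqX' : ∀ t : ℝ, 0 ≤ t →
      X' t = X₀ + (∫ s in (0:ℝ)..t, (b + μ * max (-(X' s)) (∑ i, U' s i))) + σ * W t)
    (heqU' : ∀ t : ℝ, 0 ≤ t → ∀ i, U' t i = U₀ i +
      ∫ s in (0:ℝ)..t,
        (β i * max (-(X' s + ∑ j, U' s j)) 0 +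
          ((R - Matrix.diagonal γ) *ᵥ (U' s)) i)) :
    ∀ t : ℝ, 0 ≤ t → X t = X' t ∧ ∀ i, U t i = U' t i := by
  classical
  set A : Matrix (Fin m) (Fin m) ℝ := R - Matrix.diagonal γ with hAdef
  -- globally continuous extensions of the solutions
  have hr : Continuous fun t : ℝ => max t 0 := continuous_id.max continuous_const
  have hrm : ∀ t : ℝ, max t 0 ∈ Set.Ici (0:ℝ) := fun t => le_max_right t 0
  set Y : ℝ → ℝ := fun t => X (max t 0) with hYdef
  set Y' : ℝ → ℝ := fun t => X' (max t 0) with hY'def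
  set Z : ℝ → Fin m → ℝ := fun t i => U (max t 0) i with hZdef
  set Z' : ℝ → Fin m → ℝ := fun t i => U' (max t 0) i with hZ'def
  have hYc : Continuous Y := hX.comp_continuous hr hrm
  have hY'c : Continuous Y' := hX'.comp_continuous hr hrm
  have hZc : ∀ i, Continuous fun t => Z t i := fun i => (hU i).comp_continuous hr hrm
  have hZ'c : ∀ i, Continuous fun t => Z' t i := fun i => (hU' i).comp_continuous hr hrm
  have hSZ : Continuous fun t => ∑ i, Z t i := continuous_finset_sum _ fun i _ => hZc i
  have hSZ' : Continuous fun t => ∑ i, Z' t i := continuous_finset_sum _ fun i _ => hZ'c i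
  -- globally continuous versions of the integrands
  set gX : ℝ → ℝ := fun s => b + μ * max (-(Y s)) (∑ i, Z s i) with hgXdef
  set gX' : ℝ → ℝ := fun s => b + μ * max (-(Y' s)) (∑ i, Z' s i) with hgX'def
  set gU : Fin m → ℝ → ℝ :=
    fun i s => β i * max (-(Y s + ∑ j, Z s j)) 0 + ∑ j, A i j * Z s j with hgUdef
  set gU' : Fin m → ℝ → ℝ :=
    fun i s => β i * max (-(Y' s + ∑ j, Z' s j)) 0 + ∑ j, A i j * Z' s j with hgU'def
  have hgXc : Continuous gX :=
    continuous_const.add (continuous_const.mul (hYc.neg.max hSZ))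
  have hgX'c : Continuous gX' :=
    continuous_const.add (continuous_const.mul (hY'c.neg.max hSZ'))
  have hgUc : ∀ i, Continuous (gU i) := fun i =>
    (continuous_const.mul (((hYc.add hSZ).neg).max continuous_const)).add
      (continuous_finset_sum _ fun j _ => continuous_const.mul (hZc j))
  have hgU'c : ∀ i, Continuous (gU' i) := fun i =>
    (continuous_const.mul (((hY'c.add hSZ').neg).max continuous_const)).add
      (continuous_finset_sum _ fun j _ => continuous_const.mul (hZ'c j))
  -- the integral representations of the differences
  have hXint : ∀ t : ℝ, 0 ≤ t → X t - X' t = ∫ s in (0:ℝ)..t, (gX s - gX' s) := by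
    intro t ht
    have e1 : (∫ s in (0:ℝ)..t, (b + μ * max (-(X s)) (∑ i, U s i)))
        = ∫ s in (0:ℝ)..t, gX s := by
      apply intervalIntegral.integral_congr
      intro s hs
      rw [Set.uIcc_of_le ht] at hs
      have h0 : max s 0 = s := max_eq_left hs.1
      simp only [hgXdef, hYdef, hZdef, h0]
    have e2 : (∫ s in (0:ℝ)..t, (b + μ * max (-(X' s)) (∑ i, U' s i)))
        = ∫ s in (0:ℝ)..t, gX' s := by
      apply intervalIntegral.integral_congr
      intro s hs
      rw [Set.uIcc_of_le ht] at hs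
      have h0 : max s 0 = s := max_eq_left hs.1
      simp only [hgX'def, hY'def, hZ'def, h0]
    rw [heqX t ht, heqX' t ht, e1, e2,
      intervalIntegral.integral_sub (hgXc.intervalIntegrable 0 t)
        (hgX'c.intervalIntegrable 0 t)]
    ring
  have hUint : ∀ (i : Fin m) (t : ℝ), 0 ≤ t →
      U t i - U' t i = ∫ s in (0:ℝ)..t, (gU i s - gU' i s) := by
    intro i t ht
    have e1 : (∫ s in (0:ℝ)..t,
        (β i * max (-(X s + ∑ j, U s j)) 0 + (A *ᵥ (U s)) i))
        = ∫ s in (0:ℝ)..t, gU i s := by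
      apply intervalIntegral.integral_congr
      intro s hs
      rw [Set.uIcc_of_le ht] at hs
      have h0 : max s 0 = s := max_eq_left hs.1
      simp only [hgUdef, hYdef, hZdef, h0, Matrix.mulVec, dotProduct]
    have e2 : (∫ s in (0:ℝ)..t,
        (β i * max (-(X' s + ∑ j, U' s j)) 0 + (A *ᵥ (U' s)) i))
        = ∫ s in (0:ℝ)..t, gU' i s := by
      apply intervalIntegral.integral_congr
      intro s hs
      rw [Set.uIcc_of_le ht] at hs
      have h0 : max s 0 = s := max_eq_left hs.1
      simp only [hgU'def, hY'def, hZ'def, h0, Matrix.mulVec, dotProduct]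
    rw [heqU t ht i, heqU' t ht i, e1, e2,
      intervalIntegral.integral_sub ((hgUc i).intervalIntegrable 0 t)
        ((hgU'c i).intervalIntegrable 0 t)]
    ring
  -- the difference functions
  set D : ℝ → ℝ × (Fin m → ℝ) :=
    fun t => (X t - X' t, fun i => U t i - U' t i) with hDdef
  set D' : ℝ → ℝ × (Fin m → ℝ) :=
    fun t => (gX t - gX' t, fun i => gU i t - gU' i t) with hD'def
  set F : ℝ → ℝ × (Fin m → ℝ) :=
    fun t => (∫ s in (0:ℝ)..t, (gX s - gX' s),
      fun i => ∫ s in (0:ℝ)..t, (gU i s - gU' i s)) with hFdef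
  have hFderiv : ∀ t : ℝ, HasDerivAt F (D' t) t := by
    intro t
    simp only [hFdef, hD'def]
    apply HasDerivAt.prodMk
    · exact intervalIntegral.integral_hasDerivAt_right
        ((hgXc.sub hgX'c).intervalIntegrable 0 t)
        (hgXc.sub hgX'c).stronglyMeasurable.aestronglyMeasurable.stronglyMeasurableAtFilter
        (hgXc.sub hgX'c).continuousAt
    · rw [hasDerivAt_pi]
      intro i
      exact intervalIntegral.integral_hasDerivAt_right
        (((hgUc i).sub (hgU'c i)).intervalIntegrable 0 t)
        ((hgUc i).sub (hgU'c i)).stronglyMeasurable.aestronglyMeasurable.stronglyMeasurableAtFilter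
        ((hgUc i).sub (hgU'c i)).continuousAt
  have hEq : Set.EqOn D F (Set.Ici 0) := by
    intro x hx
    simp only [hDdef, hFdef, Prod.mk.injEq]
    exact ⟨hXint x hx, funext fun i => hUint i x hx⟩
  -- the Lipschitz constant
  set S : ℝ := ∑ i, ∑ j, |A i j| with hSdef
  set B : ℝ := ∑ i, β i with hBdef
  have hB0 : 0 ≤ B := Finset.sum_nonneg fun i _ => hβ i
  have hS0 : 0 ≤ S :=
    Finset.sum_nonneg fun i _ => Finset.sum_nonneg fun j _ => abs_nonneg _
  have hm1 : (0:ℝ) ≤ 1 + m := by positivity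
  set K : ℝ := μ * (1 + m) + B * (1 + m) + S with hKdef
  -- the key differential-inequality bound
  have hbound : ∀ x : ℝ, 0 ≤ x → ‖D' x‖ ≤ K * ‖D x‖ := by
    intro x hx
    have h0 : max x 0 = x := max_eq_left hx
    have hN0 : 0 ≤ ‖D x‖ := norm_nonneg _
    have hXb : |X x - X' x| ≤ ‖D x‖ := by
      have h1 := norm_fst_le (D x)
      simpa only [hDdef, Real.norm_eq_abs] using h1
    have hUb : ∀ i, |U x i - U' x i| ≤ ‖D x‖ := by
      intro i
      have h1 := norm_le_pi_norm (D x).2 i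
      have h2 := norm_snd_le (D x)
      simp only [hDdef, Real.norm_eq_abs] at h1 h2
      exact h1.trans h2
    have hSb : |(∑ j, U x j) - ∑ j, U' x j| ≤ m * ‖D x‖ := by
      rw [← Finset.sum_sub_distrib]
      calc |∑ j, (U x j - U' x j)| ≤ ∑ j, |U x j - U' x j| :=
            Finset.abs_sum_le_sum_abs _ _
        _ ≤ ∑ _j : Fin m, ‖D x‖ := Finset.sum_le_sum fun j _ => hUb j
        _ = m * ‖D x‖ := by
            simp [Finset.sum_const, Fintype.card_fin, nsmul_eq_mul]
    -- first component
    have hp1 : |gX x - gX' x| ≤ μ * (1 + m) * ‖D x‖ := by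
      have e : gX x - gX' x
          = μ * (max (-(X x)) (∑ i, U x i) - max (-(X' x)) (∑ i, U' x i)) := by
        simp only [hgXdef, hgX'def, hYdef, hZdef, hY'def, hZ'def, h0]
        ring
      rw [e, abs_mul, abs_of_pos hμ]
      have h2 := abs_max_sub_max_le_max (-(X x)) (∑ i, U x i) (-(X' x)) (∑ i, U' x i)
      have h3 : |(-(X x)) - -(X' x)| = |X x - X' x| := by
        rw [show (-(X x)) - -(X' x) = -(X x - X' x) by ring, abs_neg]
      have h4 : max |(-(X x)) - -(X' x)| |(∑ i, U x i) - ∑ i, U' x i|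
          ≤ (1 + m) * ‖D x‖ := by
        apply max_le
        · rw [h3]; nlinarith [hXb]
        · nlinarith [hSb]
      calc μ * |max (-(X x)) (∑ i, U x i) - max (-(X' x)) (∑ i, U' x i)|
          ≤ μ * ((1 + m) * ‖D x‖) :=
            mul_le_mul_of_nonneg_left (h2.trans h4) hμ.le
        _ = μ * (1 + m) * ‖D x‖ := by ring
    -- second components
    have hq1 : ∀ i, |gU i x - gU' i x| ≤ (B * (1 + m) + S) * ‖D x‖ := by
      intro i
      have esum : ∑ j, A i j * (U x j - U' x j)
          = (∑ j, A i j * U x j) - ∑ j, A i j * U' x j := by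
        rw [← Finset.sum_sub_distrib]
        exact Finset.sum_congr rfl fun j _ => mul_sub _ _ _
      have e : gU i x - gU' i x
          = β i * (max (-(X x + ∑ j, U x j)) 0 - max (-(X' x + ∑ j, U' x j)) 0)
            + ∑ j, A i j * (U x j - U' x j) := by
        simp only [hgUdef, hgU'def, hYdef, hZdef, hY'def, hZ'def, h0, esum]
        ring
      have hβi : β i ≤ B := by
        rw [hBdef]
        exact Finset.single_le_sum (fun j _ => hβ j) (Finset.mem_univ i)
      have hrow : (∑ j, |A i j|) ≤ S := by
        rw [hSdef]
        exact Finset.single_le_sum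
          (f := fun k => ∑ j, |A k j|)
          (fun k _ => Finset.sum_nonneg fun j _ => abs_nonneg _) (Finset.mem_univ i)
      have hmax : |max (-(X x + ∑ j, U x j)) 0 - max (-(X' x + ∑ j, U' x j)) 0|
          ≤ (1 + m) * ‖D x‖ := by
        have h2 := abs_max_sub_max_le_max (-(X x + ∑ j, U x j)) 0
          (-(X' x + ∑ j, U' x j)) 0
        have h3 : |(-(X x + ∑ j, U x j)) - -(X' x + ∑ j, U' x j)|
            ≤ (1 + m) * ‖D x‖ := by
          have : (-(X x + ∑ j, U x j)) - -(X' x + ∑ j, U' x j)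
              = -((X x - X' x) + ((∑ j, U x j) - ∑ j, U' x j)) := by ring
          rw [this, abs_neg]
          calc |(X x - X' x) + ((∑ j, U x j) - ∑ j, U' x j)|
              ≤ |X x - X' x| + |(∑ j, U x j) - ∑ j, U' x j| := abs_add_le _ _
            _ ≤ (1 + m) * ‖D x‖ := by nlinarith [hXb, hSb]
        have h4 : max |(-(X x + ∑ j, U x j)) - -(X' x + ∑ j, U' x j)| |(0:ℝ) - 0|
            ≤ (1 + m) * ‖D x‖ := by
          apply max_le h3
          simpa using mul_nonneg hm1 hN0
        exact h2.trans h4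
      have hsum : |∑ j, A i j * (U x j - U' x j)| ≤ S * ‖D x‖ := by
        calc |∑ j, A i j * (U x j - U' x j)|
            ≤ ∑ j, |A i j * (U x j - U' x j)| := Finset.abs_sum_le_sum_abs _ _
          _ = ∑ j, |A i j| * |U x j - U' x j| := by
              simp [abs_mul]
          _ ≤ ∑ j, |A i j| * ‖D x‖ :=
              Finset.sum_le_sum fun j _ =>
                mul_le_mul_of_nonneg_left (hUb j) (abs_nonneg _)
          _ = (∑ j, |A i j|) * ‖D x‖ := by rw [Finset.sum_mul]
          _ ≤ S * ‖D x‖ := mul_le_mul_of_nonneg_right hrow hN0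
      calc |gU i x - gU' i x|
          ≤ |β i * (max (-(X x + ∑ j, U x j)) 0 - max (-(X' x + ∑ j, U' x j)) 0)|
            + |∑ j, A i j * (U x j - U' x j)| := by rw [e]; exact abs_add_le _ _
        _ ≤ β i * ((1 + m) * ‖D x‖) + S * ‖D x‖ := by
            refine add_le_add ?_ hsum
            rw [abs_mul, abs_of_nonneg (hβ i)]
            exact mul_le_mul_of_nonneg_left hmax (hβ i)
        _ ≤ (B * (1 + m) + S) * ‖D x‖ := by nlinarith [mul_nonneg (mul_nonneg (sub_nonneg.mpr hβi) hm1) hN0]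
    -- assemble
    have hKN : μ * (1 + m) * ‖D x‖ ≤ K * ‖D x‖ := by nlinarith [mul_nonneg (mul_nonneg hB0 hm1) hN0, mul_nonneg hS0 hN0]
    have hKN' : (B * (1 + m) + S) * ‖D x‖ ≤ K * ‖D x‖ := by
      nlinarith [mul_nonneg (mul_nonneg hμ.le hm1) hN0]
    have hKN0 : 0 ≤ K * ‖D x‖ := le_trans (by positivity) hKN
    rw [hD'def, Prod.norm_def]
    apply max_le
    · rw [Real.norm_eq_abs]
      exact hp1.trans hKN
    · rw [pi_norm_le_iff_of_nonneg hKN0]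
      intro i
      rw [Real.norm_eq_abs]
      exact (hq1 i).trans hKN'
  -- initial condition
  have hx0 : X 0 = X' 0 := by
    rw [heqX 0 le_rfl, heqX' 0 le_rfl]
    simp [hW0]
  have hu0 : ∀ i, U 0 i = U' 0 i := by
    intro i
    rw [heqU 0 le_rfl i, heqU' 0 le_rfl i]
    simp
  have hD0 : D 0 = 0 := by
    simp only [hDdef]
    have h1 : X 0 - X' 0 = 0 := by rw [hx0, sub_self]
    have h2 : (fun i => U 0 i - U' 0 i) = (0 : Fin m → ℝ) :=
      funext fun i => by simp [hu0 i]
    rw [h1, h2]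
    rfl
  -- Grönwall
  intro t ht
  have hcF : Continuous F := by
    rw [continuous_iff_continuousAt]
    exact fun x => (hFderiv x).continuousAt
  have hgron := norm_le_gronwallBound_of_norm_deriv_right_le
    (f := D) (f' := D') (δ := 0) (K := K) (ε := 0) (a := 0) (b := t)
    (hcF.continuousOn.congr (hEq.mono (Set.Icc_subset_Ici_self)))
    (fun x hx => ((hFderiv x).hasDerivWithinAt).congr
      (fun y hy => hEq (le_trans hx.1 hy)) (hEq hx.1))
    (by rw [hD0]; simp)
    (fun x hx => by rw [add_zero]; exact hbound x hx.1)
    t (Set.right_mem_Icc.mpr ht)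
  rw [sub_zero, gronwallBound_ε0_δ0] at hgron
  have hDt : D t = 0 := norm_le_zero_iff.mp hgron
  simp only [hDdef] at hDt
  have e1 : X t - X' t = 0 := congrArg Prod.fst hDt
  have e2 : ∀ i, U t i - U' t i = 0 := fun i => congrFun (congrArg Prod.snd hDt) i
  exact ⟨sub_eq_zero.mp e1, fun i => sub_eq_zero.mp (e2 i)⟩
end

section
/- Fix m ≥ 1, constants b ∈ ℝ, σ ∈ ℝ, μ > 0, vectors β, γ ∈ [0,∞)^m, an m×m transition rate matrix R, a continuous function W : [0,∞) → ℝ with W(0) = 0, and initial values X₀ ≥ 0, U₀ ∈ [0,∞)^m. Let G = diag(γ). Suppose (X, U, L) and (X', U', L') are two triples of continuous functions where X, X' : [0,∞) → [0,∞), L is a boundary term for X at zero, L' is a boundary term for X' at zero, and for all t ≥ 0: X(t) = X₀ + ∫₀ᵗ [b + μ·V(s)] ds + σW(t) + L(t) and U(t) = U₀ + ∫₀ᵗ (R − G)U(s) ds + (β/μ)L(t), where V(s) = U₁(s) + ⋯ + U_m(s) (and likewise for the primed triple). Then X = X', U = U', and L = L'; i.e., pathwise uniqueness holds for the multi-stage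 near-Halfin–Whitt limit system. -/
open Finset Matrix MeasureTheory

/-! The regulator of a reflected path is Skorokhod's running maximum
`L t = max_{s ≤ t} (L s - X s)⁺`, so it depends 1-Lipschitz, in the sup norm, on the free path
`X - L`. For two solutions the free paths differ by `μ ∫₀ᵗ (V - V')`, while
`U - U' = ∫₀ᵗ (R - G)(U - U') + (β/μ)(L - L')`; hence the `ℓ¹`-distance `g` of `U` and `U'`
satisfies `g t ≤ C ∫₀ᵗ g`, and Grönwall's inequality forces `g = 0`. -/

open Set

theorem ContinuousOn.exists_last_zero {X : ℝ → ℝ} {a t : ℝ} (hX : ContinuousOn X (Icc a t))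
    (hat : a ≤ t) : ∃ τ ∈ Icc a t, (τ = a ∨ X τ = 0) ∧ ∀ s ∈ Ioc τ t, X s ≠ 0 := by
  set Z := {a} ∪ (Icc a t ∩ X ⁻¹' {0})
  have hZ : IsClosed Z :=
    isClosed_singleton.union (hX.preimage_isClosed_of_isClosed isClosed_Icc isClosed_singleton)
  have hZt : Z ⊆ Icc a t := union_subset (singleton_subset_iff.2 (left_mem_Icc.2 hat))
    inter_subset_left
  have hbdd : BddAbove Z := bddAbove_Icc.mono hZt
  have hmem : sSup Z ∈ Z := hZ.csSup_mem (Set.singleton_nonempty a).inl hbdd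
  refine ⟨sSup Z, hZt hmem, hmem.imp id And.right, fun s hs hXs => hs.1.not_ge ?_⟩
  exact le_csSup hbdd (Or.inr ⟨⟨(hZt hmem).1.trans hs.1.le, hs.2⟩, hXs⟩)

theorem abs_sub_le_of_isGreatest_image {α : Type*} {f g : α → ℝ} {S : Set α} {a b K : ℝ}
    (ha : IsGreatest (f '' S) a) (hb : IsGreatest (g '' S) b)
    (hfg : ∀ s ∈ S, |f s - g s| ≤ K) : |a - b| ≤ K := by
  obtain ⟨⟨s, hs, rfl⟩, hfa⟩ := ha
  obtain ⟨⟨s', hs', rfl⟩, hgb⟩ := hb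
  have h₁ := hgb (mem_image_of_mem g hs)
  have h₂ := hfa (mem_image_of_mem f hs')
  have h₃ := abs_le.1 (hfg s hs)
  have h₄ := abs_le.1 (hfg s' hs')
  exact abs_le.2 ⟨by linarith, by linarith⟩

theorem ContinuousOn.intervalIntegrable_of_Ici {f : ℝ → ℝ} (hf : ContinuousOn f (Ici 0))
    {t : ℝ} (ht : 0 ≤ t) : IntervalIntegrable f volume 0 t :=
  (hf.mono (by rw [uIcc_of_le ht]; exact Icc_subset_Ici_self)).intervalIntegrable

theorem abs_intervalIntegral_le_mul_integral {f g : ℝ → ℝ} {c s t : ℝ}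
    (hf : ContinuousOn f (Ici 0)) (hg : ContinuousOn g (Ici 0))
    (hfg : ∀ r, 0 ≤ r → |f r| ≤ c * g r) (hs : 0 ≤ s) (hst : s ≤ t) :
    |∫ r in 0..s, f r| ≤ c * ∫ r in 0..t, g r := by
  have hcg : ContinuousOn (fun r => c * g r) (Ici 0) := continuousOn_const.mul hg
  rw [← intervalIntegral.integral_const_mul]
  calc |∫ r in 0..s, f r| ≤ ∫ r in 0..s, |f r| := intervalIntegral.abs_integral_le_integral_abs hs
    _ ≤ ∫ r in 0..s, c * g r :=
      intervalIntegral.integral_mono_on hs (hf.abs.intervalIntegrable_of_Ici hs)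
        (hcg.intervalIntegrable_of_Ici hs) fun r hr => hfg r hr.1
    _ ≤ ∫ r in 0..t, c * g r :=
      intervalIntegral.integral_mono_interval le_rfl hs hst
        (ae_restrict_of_forall_mem measurableSet_Ioc fun r hr =>
          (abs_nonneg _).trans (hfg r hr.1.le))
        (hcg.intervalIntegrable_of_Ici (hs.trans hst))

namespace IsBoundaryTerm

variable {X L : ℝ → ℝ}

theorem eq_of_forall_Ioc_pos (h : IsBoundaryTerm X L) {a t : ℝ} (ha : 0 ≤ a) (hat : a ≤ t)
    (hX : ∀ s ∈ Ioc a t, 0 < X s) : L t = L a := by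
  obtain ⟨-, -, -, S, hSL, -, hS⟩ := h
  have hnull : S.measure (Ioc a t) = 0 :=
    measure_mono_null (fun s hs => show 0 ≤ s ∧ 0 < X s from ⟨ha.trans hs.1.le, hX s hs⟩) hS
  rw [S.measure_Ioc, ENNReal.ofReal_eq_zero, sub_nonpos] at hnull
  rw [← hSL t (ha.trans hat), ← hSL a ha]
  exact le_antisymm hnull (S.mono hat)

theorem isGreatest_image (hX : ContinuousOn X (Ici 0)) (hXnn : ∀ t, 0 ≤ t → 0 ≤ X t)
    (h : IsBoundaryTerm X L) {t : ℝ} (ht : 0 ≤ t) :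
    IsGreatest ((fun s => max (L s - X s) 0) '' Icc 0 t) (L t) := by
  have ⟨hL0, hLnn, hLmono, _⟩ := h
  refine ⟨?_, ?_⟩
  · obtain ⟨τ, hτ, hτ0, hXne⟩ := (hX.mono Icc_subset_Ici_self).exists_last_zero ht
    refine ⟨τ, hτ, ?_⟩
    dsimp only
    rw [h.eq_of_forall_Ioc_pos hτ.1 hτ.2 fun s hs =>
      (hXnn s (hτ.1.trans hs.1.le)).lt_of_ne' (hXne s hs)]
    rcases hτ0 with rfl | hXτ0
    · rw [hL0, zero_sub, max_eq_right (neg_nonpos.2 (hXnn 0 le_rfl))]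
    · rw [hXτ0, sub_zero, max_eq_left (hLnn τ hτ.1)]
  · rintro _ ⟨s, hs, rfl⟩
    exact max_le (by linarith [hLmono hs.1 ht hs.2, hXnn s hs.1]) (hLnn t ht)

theorem abs_sub_le {X' L' : ℝ → ℝ} (hX : ContinuousOn X (Ici 0))
    (hX' : ContinuousOn X' (Ici 0)) (hXnn : ∀ t, 0 ≤ t → 0 ≤ X t)
    (hXnn' : ∀ t, 0 ≤ t → 0 ≤ X' t) (h : IsBoundaryTerm X L) (h' : IsBoundaryTerm X' L')
    {t K : ℝ} (ht : 0 ≤ t) (hK : ∀ s ∈ Icc 0 t, |(X s - L s) - (X' s - L' s)| ≤ K) :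
    |L t - L' t| ≤ K :=
  abs_sub_le_of_isGreatest_image (h.isGreatest_image hX hXnn ht)
    (h'.isGreatest_image hX' hXnn' ht) fun s hs =>
      (abs_max_sub_max_le_abs _ _ _).trans <| by
        rw [abs_sub_comm]; exact (le_of_eq (congrArg _ (by ring))).trans (hK s hs)


theorem abs_sub_le_of_sub_integral_eq {X' L' f f' g : ℝ → ℝ} {c : ℝ}
    (hX : ContinuousOn X (Ici 0)) (hX' : ContinuousOn X' (Ici 0))
    (hXnn : ∀ t, 0 ≤ t → 0 ≤ X t) (hXnn' : ∀ t, 0 ≤ t → 0 ≤ X' t)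
    (h : IsBoundaryTerm X L) (h' : IsBoundaryTerm X' L')
    (hf : ContinuousOn f (Ici 0)) (hf' : ContinuousOn f' (Ici 0)) (hg : ContinuousOn g (Ici 0))
    (hfg : ∀ r, 0 ≤ r → |f r - f' r| ≤ c * g r)
    (heq : ∀ t, 0 ≤ t → X t - L t - ∫ r in 0..t, f r = X' t - L' t - ∫ r in 0..t, f' r)
    {t : ℝ} (ht : 0 ≤ t) :
    |(X t - L t) - (X' t - L' t)| ≤ c * ∫ r in 0..t, g r ∧ |L t - L' t| ≤ c * ∫ r in 0..t, g r := by
  have hfree : ∀ s ∈ Icc 0 t, |(X s - L s) - (X' s - L' s)| ≤ c * ∫ r in 0..t, g r := by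
    rintro s ⟨hs, hst⟩
    have hdiff : (X s - L s) - (X' s - L' s) = ∫ r in 0..s, (f r - f' r) := by
      rw [intervalIntegral.integral_sub (hf.intervalIntegrable_of_Ici hs)
        (hf'.intervalIntegrable_of_Ici hs)]
      linarith [heq s hs]
    rw [hdiff]
    exact abs_intervalIntegral_le_mul_integral (hf.sub hf') hg hfg hs hst
  exact ⟨hfree t ⟨ht, le_rfl⟩, h.abs_sub_le hX hX' hXnn hXnn' h' ht hfree⟩

end IsBoundaryTerm

theorem eq_zero_of_le_mul_integral {g : ℝ → ℝ} {K : ℝ} (hg : ContinuousOn g (Ici 0))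
    (hgnn : ∀ t, 0 ≤ t → 0 ≤ g t) (hle : ∀ t, 0 ≤ t → g t ≤ K * ∫ s in 0..t, g s)
    {t : ℝ} (ht : 0 ≤ t) : g t = 0 := by
  set φ : ℝ → ℝ := fun u => ∫ s in 0..u, g s
  have hφnn : ∀ u, 0 ≤ u → 0 ≤ φ u := fun u hu =>
    intervalIntegral.integral_nonneg hu fun s hs => hgnn s hs.1
  have hφ : ContinuousOn φ (Icc 0 t) := by
    simpa [uIcc_of_le ht] using intervalIntegral.continuousOn_primitive_interval'
      (hg.intervalIntegrable_of_Ici ht) (left_mem_uIcc (a := 0) (b := t))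
  have hφ' : ∀ u ∈ Ico 0 t, HasDerivWithinAt φ (g u) (Ici u) u := fun u hu =>
    have hsub : Ioi u ⊆ Ici 0 := fun x hx => hu.1.trans hx.le
    intervalIntegral.integral_hasDerivWithinAt_right (hg.intervalIntegrable_of_Ici hu.1)
      ⟨Ici 0, Filter.mem_of_superset self_mem_nhdsWithin hsub,
        hg.aestronglyMeasurable measurableSet_Ici⟩
      ((hg u hu.1).mono hsub)
  have hφ0 := eq_zero_of_abs_deriv_le_mul_abs_self_of_eq_zero_right hφ hφ'
    intervalIntegral.integral_same fun u hu => by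
      rw [Real.norm_of_nonneg (hgnn u hu.1), Real.norm_of_nonneg (hφnn u hu.1)]
      exact hle u hu.1
  have hφt : ∫ s in 0..t, g s = 0 := hφ0 t (right_mem_Icc.2 ht)
  exact le_antisymm ((hle t ht).trans_eq (by rw [hφt, mul_zero])) (hgnn t ht)

theorem continuousOn_mulVec_apply {ι κ : Type*} [Fintype κ] (A : Matrix ι κ ℝ)
    {D : ℝ → κ → ℝ} {S : Set ℝ} (hD : ∀ j, ContinuousOn (fun t => D t j) S) (i : ι) :
    ContinuousOn (fun t => (A *ᵥ D t) i) S :=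
  ((continuous_apply i).comp (continuous_const.matrix_mulVec continuous_id)).comp_continuousOn
    (continuousOn_pi.2 hD)

theorem abs_mulVec_apply_le {ι κ : Type*} [Fintype κ] (A : Matrix ι κ ℝ) (v : κ → ℝ) (i : ι) :
    |(A *ᵥ v) i| ≤ (∑ j, |A i j|) * ∑ j, |v j| :=
  calc |(A *ᵥ v) i| = |∑ j, A i j * v j| := rfl
    _ ≤ ∑ j, |A i j| * |v j| := by
      simpa only [abs_mul] using abs_sum_le_sum_abs (fun j => A i j * v j) univ
    _ ≤ ∑ j, |A i j| * ∑ k, |v k| := by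
      gcongr with j
      exact single_le_sum (fun k _ => abs_nonneg (v k)) (mem_univ j)
    _ = (∑ j, |A i j|) * ∑ j, |v j| := (sum_mul ..).symm

theorem eq_zero_of_eq_integral_mulVec_add_mul {ι : Type*} [Fintype ι] {A : Matrix ι ι ℝ}
    {c : ι → ℝ} {κ : ℝ} {D : ℝ → ι → ℝ} {ℓ : ℝ → ℝ}
    (hD : ∀ i, ContinuousOn (fun t => D t i) (Ici 0))
    (hDeq : ∀ t, 0 ≤ t → ∀ i, D t i = (∫ s in 0..t, (A *ᵥ D s) i) + c i * ℓ t)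
    (hℓ : ∀ t, 0 ≤ t → |ℓ t| ≤ κ * ∫ s in 0..t, ∑ i, |D s i|) {t : ℝ} (ht : 0 ≤ t) :
    D t = 0 := by
  set g : ℝ → ℝ := fun s => ∑ i, |D s i|
  have hg : ContinuousOn g (Ici 0) := continuousOn_finsetSum _ fun i _ => (hD i).abs
  have hcoord : ∀ t, 0 ≤ t → ∀ i, |D t i| ≤ (∑ j, |A i j| + κ * |c i|) * ∫ s in 0..t, g s := by
    intro t ht i
    rw [hDeq t ht i, add_mul]
    refine (abs_add_le _ _).trans (add_le_add ?_ ?_)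
    · exact abs_intervalIntegral_le_mul_integral (continuousOn_mulVec_apply A hD i) hg
        (fun r _ => abs_mulVec_apply_le A (D r) i) ht le_rfl
    · rw [abs_mul, mul_comm κ, mul_assoc]
      exact mul_le_mul_of_nonneg_left (hℓ t ht) (abs_nonneg _)
  have hg0 : g t = 0 := eq_zero_of_le_mul_integral hg
    (fun _ _ => sum_nonneg fun i _ => abs_nonneg _)
    (fun t ht => (sum_le_sum fun i _ => hcoord t ht i).trans_eq (sum_mul ..).symm) ht
  funext i
  exact abs_eq_zero.1 ((sum_eq_zero_iff_of_nonneg fun j _ => abs_nonneg _).1 hg0 i (mem_univ i))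

theorem multistage_near_hw_pathwise_uniqueness_general
    (m : ℕ)
    (b σ μ : ℝ)
    (β γ : Fin m → ℝ)
    (R : Matrix (Fin m) (Fin m) ℝ)
    (W : ℝ → ℝ)
    (X₀ : ℝ) (U₀ : Fin m → ℝ)
    (X L X' L' : ℝ → ℝ) (U U' : ℝ → Fin m → ℝ)
    (hX : ContinuousOn X (Set.Ici 0)) (hX' : ContinuousOn X' (Set.Ici 0))
    (hU : ∀ i, ContinuousOn (fun t => U t i) (Set.Ici 0))
    (hU' : ∀ i, ContinuousOn (fun t => U' t i) (Set.Ici 0))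
    (hXnn : ∀ t : ℝ, 0 ≤ t → 0 ≤ X t) (hXnn' : ∀ t : ℝ, 0 ≤ t → 0 ≤ X' t)
    (hbdry : IsBoundaryTerm X L) (hbdry' : IsBoundaryTerm X' L')
    (heqX : ∀ t : ℝ, 0 ≤ t →
      X t = X₀ + (∫ s in (0:ℝ)..t, (b + μ * ∑ i, U s i)) + σ * W t + L t)
    (heqU : ∀ t : ℝ, 0 ≤ t → ∀ i, U t i = U₀ i +
      (∫ s in (0:ℝ)..t, ((R - Matrix.diagonal γ) *ᵥ (U s)) i) + (β i / μ) * L t)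
    (heqX' : ∀ t : ℝ, 0 ≤ t →
      X' t = X₀ + (∫ s in (0:ℝ)..t, (b + μ * ∑ i, U' s i)) + σ * W t + L' t)
    (heqU' : ∀ t : ℝ, 0 ≤ t → ∀ i, U' t i = U₀ i +
      (∫ s in (0:ℝ)..t, ((R - Matrix.diagonal γ) *ᵥ (U' s)) i) + (β i / μ) * L' t) :
    ∀ t : ℝ, 0 ≤ t → X t = X' t ∧ (∀ i, U t i = U' t i) ∧ L t = L' t := by
  have hD : ∀ i, ContinuousOn (fun t => (U - U') t i) (Ici 0) := fun i => (hU i).sub (hU' i)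
  set g : ℝ → ℝ := fun s => ∑ i, |(U - U') s i|
  have hg : ContinuousOn g (Ici 0) := continuousOn_finsetSum _ fun i _ => (hD i).abs
  have hrefl : ∀ t, 0 ≤ t → |(X t - L t) - (X' t - L' t)| ≤ |μ| * ∫ r in 0..t, g r ∧
      |L t - L' t| ≤ |μ| * ∫ r in 0..t, g r := fun t ht =>
    hbdry.abs_sub_le_of_sub_integral_eq (f := fun r => b + μ * ∑ i, U r i)
      (f' := fun r => b + μ * ∑ i, U' r i) hX hX' hXnn hXnn' hbdry' (by fun_prop) (by fun_prop) hg
      (fun r _ => by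
        rw [add_sub_add_left_eq_sub, ← mul_sub, ← sum_sub_distrib, abs_mul]
        exact mul_le_mul_of_nonneg_left (abs_sum_le_sum_abs _ _) (abs_nonneg μ))
      (fun s hs => by rw [heqX s hs, heqX' s hs]; ring) ht
  have hstage : ∀ t, 0 ≤ t → ∀ i, (U - U') t i =
      (∫ s in 0..t, ((R - diagonal γ) *ᵥ (U - U') s) i) + β i / μ * (L t - L' t) := by
    intro t ht i
    simp only [Pi.sub_apply, mulVec_sub]
    rw [heqU t ht i, heqU' t ht i, intervalIntegral.integral_sub
      ((continuousOn_mulVec_apply _ hU i).intervalIntegrable_of_Ici ht)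
      ((continuousOn_mulVec_apply _ hU' i).intervalIntegrable_of_Ici ht)]
    ring
  have hUeq : ∀ s, 0 ≤ s → U s = U' s := fun s hs =>
    sub_eq_zero.1 (eq_zero_of_eq_integral_mulVec_add_mul hD hstage (fun t ht => (hrefl t ht).2) hs)
  intro t ht
  have hg0 : ∫ r in 0..t, g r = 0 := by
    rw [intervalIntegral.integral_congr (g := fun _ => 0) fun r hr => ?_,
      intervalIntegral.integral_zero]
    rw [uIcc_of_le ht] at hr
    simp [g, hUeq r hr.1]
  obtain ⟨hXL, hLL⟩ := hrefl t ht
  rw [hg0, mul_zero, abs_nonpos_iff, sub_eq_zero] at hXL hLL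
  exact ⟨by linarith, fun i => congrFun (hUeq t ht) i, hLL⟩

/-- Pathwise uniqueness for the multi-stage near-Halfin–Whitt limit system with
`m` vacation stages: two continuous solutions `(X, U, L)` and `(X', U', L')` of
`X(t) = X₀ + ∫₀ᵗ [b + μV(s)] ds + σW(t) + L(t)`,
`U(t) = U₀ + ∫₀ᵗ (R − G)U(s) ds + (β/μ)L(t)`,
where `V = Σᵢ Uᵢ`, `G = diag(γ)`, `X, X' ≥ 0` and `L, L'` are boundary terms at
zero, coincide. -/
theorem multistage_near_hw_pathwise_uniqueness
    (m : ℕ) (hm : 1 ≤ m)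
    (b σ μ : ℝ) (hμ : 0 < μ)
    (β γ : Fin m → ℝ) (hβ : ∀ i, 0 ≤ β i) (hγ : ∀ i, 0 ≤ γ i)
    (R : Matrix (Fin m) (Fin m) ℝ) (hR : IsTransitionRateMatrix R)
    (W : ℝ → ℝ) (hW : ContinuousOn W (Set.Ici 0)) (hW0 : W 0 = 0)
    (X₀ : ℝ) (hX₀ : 0 ≤ X₀) (U₀ : Fin m → ℝ) (hU₀ : ∀ i, 0 ≤ U₀ i)
    (X L X' L' : ℝ → ℝ) (U U' : ℝ → Fin m → ℝ)
    (hX : ContinuousOn X (Set.Ici 0)) (hX' : ContinuousOn X' (Set.Ici 0))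
    (hL : ContinuousOn L (Set.Ici 0)) (hL' : ContinuousOn L' (Set.Ici 0))
    (hU : ∀ i, ContinuousOn (fun t => U t i) (Set.Ici 0))
    (hU' : ∀ i, ContinuousOn (fun t => U' t i) (Set.Ici 0))
    (hXnn : ∀ t : ℝ, 0 ≤ t → 0 ≤ X t) (hXnn' : ∀ t : ℝ, 0 ≤ t → 0 ≤ X' t)
    (hbdry : IsBoundaryTerm X L) (hbdry' : IsBoundaryTerm X' L')
    (heqX : ∀ t : ℝ, 0 ≤ t →
      X t = X₀ + (∫ s in (0:ℝ)..t, (b + μ * ∑ i, U s i)) + σ * W t + L t)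
    (heqU : ∀ t : ℝ, 0 ≤ t → ∀ i, U t i = U₀ i +
      (∫ s in (0:ℝ)..t, ((R - Matrix.diagonal γ) *ᵥ (U s)) i) + (β i / μ) * L t)
    (heqX' : ∀ t : ℝ, 0 ≤ t →
      X' t = X₀ + (∫ s in (0:ℝ)..t, (b + μ * ∑ i, U' s i)) + σ * W t + L' t)
    (heqU' : ∀ t : ℝ, 0 ≤ t → ∀ i, U' t i = U₀ i +
      (∫ s in (0:ℝ)..t, ((R - Matrix.diagonal γ) *ᵥ (U' s)) i) + (β i / μ) * L' t) :
    ∀ t : ℝ, 0 ≤ t → X t = X' t ∧ (∀ i, U t i = U' t i) ∧ L t = L' t :=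
  multistage_near_hw_pathwise_uniqueness_general m b σ μ β γ R W X₀ U₀ X L X' L' U U' hX hX' hU hU'
    hXnn hXnn' hbdry hbdry' heqX heqU heqX' heqU'
end
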